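/- arXiv:2507.15672 — 7 statements merged into one kernel-verified Lean document; each statement's English description precedes it below -/
import Mathlib

section
/- (Jacobi's theorem.) Let f(z) = ∑_{l≥0} f_l z^l be a formal power series over ℂ and n, m ∈ ℕ, and suppose the Hadamard determinant H_{n,m} ≠ 0. Then every Padé pair (Q, P) for (n, m) satisfies Q(0) ≠ 0, and in the field of formal Laurent series ℂ((z)) the series f − P/Q has zero coefficients in all degrees ≤ n+m. In particular the Padé–Jacobi approximation for (n, m) exists and coincides with the Frobenius–Padé approximation π_{n,m}(z; f). -/
open Polynomial PowerSeries

/-- A Padé pair for `(n, m)` and the series `f`: polynomials `Q ≠ 0`, `deg Q ≤ m`,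
`deg P ≤ n`, with `Q·f − P = O(z^{n+m+1})`. -/
def IsPadePair (f : PowerSeries ℂ) (n m : ℕ) (Q P : Polynomial ℂ) : Prop :=
  Q ≠ 0 ∧ Q.natDegree ≤ m ∧ P.natDegree ≤ n ∧
    ∀ l ≤ n + m, PowerSeries.coeff l ((Q : PowerSeries ℂ) * f - (P : PowerSeries ℂ)) = 0

/-- The Hadamard determinant `H_{n,m} = det (f_{n-m+i+j-1})_{i,j=1,…,m}`, with the
convention `f_p = 0` for `p < 0` (for `m = 0` this is the empty determinant, `1`). -/
noncomputable def hadamardDet (f : PowerSeries ℂ) (n m : ℕ) : ℂ :=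
  Matrix.det (fun i j : Fin m =>
    if n + 1 + i.val + j.val < m then 0
    else PowerSeries.coeff (n + 1 + i.val + j.val - m) f)

/-- The matrix of the linear system satisfied by the denominator coefficients. -/
noncomputable def jacobiMat (f : PowerSeries ℂ) (n m : ℕ) : Matrix (Fin m) (Fin m) ℂ :=
  fun i j => if n + i.val < j.val then 0 else PowerSeries.coeff (n + i.val - j.val) f

lemma jacobiMat_det_ne (f : PowerSeries ℂ) (n m : ℕ) (hH : hadamardDet f n m ≠ 0) :
    (jacobiMat f n m).det ≠ 0 := by
  have hsub : hadamardDet f n m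
      = (((jacobiMat f n m).submatrix id (Fin.revPerm : Equiv.Perm (Fin m)))).det := by
    unfold hadamardDet jacobiMat
    congr 1
    funext i j
    have hj : j.val < m := j.isLt
    simp only [Matrix.submatrix, Matrix.of_apply, id_eq, Fin.revPerm_apply, Fin.val_rev]
    by_cases h : n + 1 + i.val + j.val < m
    · rw [if_pos h, if_pos (by omega)]
    · rw [if_neg h, if_neg (by omega)]
      have he : n + 1 + i.val + j.val - m = n + i.val - (m - (j.val + 1)) := by omega
      rw [he]
  rw [hsub, Matrix.det_permute'] at hH
  intro h
  rw [h, mul_zero] at hH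
  exact hH rfl

/-- Key formula:  the `(n+1+i)`-th coefficient of `Q·f` in terms of the matrix. -/
lemma coeff_mul_poly (f : PowerSeries ℂ) (n m : ℕ) (Q : Polynomial ℂ)
    (hQ : Q.natDegree ≤ m) (i : Fin m) :
    PowerSeries.coeff (n + 1 + i.val) ((Q : PowerSeries ℂ) * f) =
      Q.coeff 0 * PowerSeries.coeff (n + 1 + i.val) f
        + ∑ j : Fin m, Q.coeff (j.val + 1) * jacobiMat f n m i j := by
  set g : ℕ → ℂ := fun k =>
    Q.coeff k * (if n + 1 + i.val < k then 0
      else PowerSeries.coeff (n + 1 + i.val - k) f) with hg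
  set N := n + 1 + i.val with hN
  have hL : PowerSeries.coeff N ((Q : PowerSeries ℂ) * f)
      = ∑ k ∈ Finset.range (max N m + 1), g k := by
    rw [PowerSeries.coeff_mul, Finset.Nat.sum_antidiagonal_eq_sum_range_succ_mk]
    rw [show (∑ k ∈ Finset.range (N+1),
        PowerSeries.coeff (k, N - k).1 (Q : PowerSeries ℂ)
          * PowerSeries.coeff (k, N - k).2 f) = ∑ k ∈ Finset.range (N+1), g k from
      Finset.sum_congr rfl (fun k hk => by
        rw [Finset.mem_range] at hk
        simp only [hg, Polynomial.coeff_coe]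
        rw [if_neg (by omega)])]
    apply Finset.sum_subset
    · exact Finset.range_subset_range.mpr (by omega)
    · intro k _ hk
      rw [Finset.mem_range, not_lt] at hk
      simp only [hg]
      rw [if_pos (by omega), mul_zero]
  have hR : Q.coeff 0 * PowerSeries.coeff N f
        + ∑ j : Fin m, Q.coeff (j.val + 1) * jacobiMat f n m i j
      = ∑ k ∈ Finset.range (max N m + 1), g k := by
    have h1 : ∑ k ∈ Finset.range (m + 1), g k
        = ∑ k ∈ Finset.range (max N m + 1), g k := by
      apply Finset.sum_subset
      · exact Finset.range_subset_range.mpr (by omega)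
      · intro k _ hk
        rw [Finset.mem_range, not_lt] at hk
        simp only [hg]
        rw [Polynomial.coeff_eq_zero_of_natDegree_lt (by omega), zero_mul]
    rw [← h1, Finset.sum_range_succ']
    have h0 : g 0 = Q.coeff 0 * PowerSeries.coeff N f := by
      simp only [hg]
      rw [if_neg (by omega)]
      simp
    have h2 : ∑ k ∈ Finset.range m, g (k + 1) = ∑ j : Fin m, g (j.val + 1) :=
      (Fin.sum_univ_eq_sum_range (fun k => g (k + 1)) m).symm
    have h3 : ∀ j : Fin m, g (j.val + 1) = Q.coeff (j.val + 1) * jacobiMat f n m i j := by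
      intro j
      have hk : j.val < m := j.isLt
      simp only [hg, jacobiMat]
      by_cases h : n + i.val < j.val
      · rw [if_pos h, if_pos (show n + 1 + i.val < j.val + 1 by omega)]
      · rw [if_neg h, if_neg (show ¬ n + 1 + i.val < j.val + 1 by omega)]
        have he : n + 1 + i.val - (j.val + 1) = n + i.val - j.val := by omega
        rw [he]
    rw [h0, h2, Finset.sum_congr rfl fun j _ => h3 j]
    ring
  rw [hL, hR]

/-- Any Padé pair has nonvanishing denominator constant coefficient. -/
lemma padePair_coeff_zero_ne (f : PowerSeries ℂ) (n m : ℕ)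
    (hH : hadamardDet f n m ≠ 0) {Q P : Polynomial ℂ}
    (h : IsPadePair f n m Q P) : Q.coeff 0 ≠ 0 := by
  obtain ⟨hQ0, hQd, hPd, hcoeff⟩ := h
  intro hc
  set M := jacobiMat f n m with hM
  have hdet := jacobiMat_det_ne f n m hH
  set v : Fin m → ℂ := fun j => Q.coeff (j.val + 1) with hv
  have hMv : M.mulVec v = 0 := by
    funext i
    have hl : n + 1 + i.val ≤ n + m := by have := i.isLt; omega
    have h1 := hcoeff (n + 1 + i.val) hl
    rw [map_sub, Polynomial.coeff_coe,
      Polynomial.coeff_eq_zero_of_natDegree_lt (by omega), sub_zero,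
      coeff_mul_poly f n m Q hQd i, hc, zero_mul, zero_add] at h1
    show ∑ j, M i j * v j = 0
    rw [← h1]
    exact Finset.sum_congr rfl fun j _ => mul_comm _ _
  have hv0 : v = 0 := by
    have : (M⁻¹ * M).mulVec v = 0 := by
      rw [← Matrix.mulVec_mulVec, hMv, Matrix.mulVec_zero]
    rwa [Matrix.nonsing_inv_mul M (isUnit_iff_ne_zero.mpr hdet),
      Matrix.one_mulVec] at this
  apply hQ0
  ext k
  rcases k with _ | k
  · simpa using hc
  · rcases lt_or_ge k m with hk | hk
    · simpa using congrFun hv0 ⟨k, hk⟩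
    · exact Polynomial.coeff_eq_zero_of_natDegree_lt (by omega)

/-- **Jacobi's theorem.** If `H_{n,m} ≠ 0`, then every Padé pair `(Q, P)` for `(n, m)`
satisfies `Q(0) ≠ 0`, and in the field of formal Laurent series `ℂ((z))` the series
`f − P/Q` has zero coefficients in all degrees `≤ n + m`.  In particular the Padé–Jacobi
approximation for `(n,m)` exists (being given by any Padé pair, which always exists)
and coincides with the Frobenius–Padé approximation `π_{n,m}(z; f)`. -/
theorem jacobi_theorem (f : PowerSeries ℂ) (n m : ℕ) (hH : hadamardDet f n m ≠ 0) :
    (∀ Q P : Polynomial ℂ, IsPadePair f n m Q P →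
      Q.eval 0 ≠ 0 ∧
      ∀ d : ℤ, d ≤ (n + m : ℤ) →
        HahnSeries.coeff
          ((f : LaurentSeries ℂ) -
            ((P : PowerSeries ℂ) : LaurentSeries ℂ) / ((Q : PowerSeries ℂ) : LaurentSeries ℂ))
          d = 0) ∧
    ∃ Q P : Polynomial ℂ, IsPadePair f n m Q P := by
  constructor
  · -- Part 1: every Padé pair works
    intro Q P hpair
    have hc0 : Q.coeff 0 ≠ 0 := padePair_coeff_zero_ne f n m hH hpair
    have heval : Q.eval 0 ≠ 0 := by
      rwa [← Polynomial.coeff_zero_eq_eval_zero]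
    refine ⟨heval, ?_⟩
    obtain ⟨hQ0, hQd, hPd, hcoeff⟩ := hpair
    set Qs : PowerSeries ℂ := (Q : PowerSeries ℂ) with hQs
    have hcc : constantCoeff Qs ≠ 0 := by
      rwa [← PowerSeries.coeff_zero_eq_constantCoeff, Polynomial.coeff_coe]
    set Rr : PowerSeries ℂ := Qs⁻¹ with hRr
    have hQR : Qs * Rr = 1 := PowerSeries.mul_inv_cancel Qs hcc
    have honemul : (Qs : LaurentSeries ℂ) * ((Rr : PowerSeries ℂ) : LaurentSeries ℂ) = 1 := by
      rw [← PowerSeries.coe_mul, hQR, PowerSeries.coe_one]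
    have hQLne : (Qs : LaurentSeries ℂ) ≠ 0 := left_ne_zero_of_mul_eq_one honemul
    have hdiv : ((P : PowerSeries ℂ) : LaurentSeries ℂ) / (Qs : LaurentSeries ℂ)
        = (((P : PowerSeries ℂ) * Rr : PowerSeries ℂ) : LaurentSeries ℂ) := by
      rw [div_eq_iff hQLne, ← PowerSeries.coe_mul, mul_assoc, mul_comm Rr Qs, hQR, mul_one]
    have key : ∀ l ≤ n + m,
        PowerSeries.coeff l (f - (P : PowerSeries ℂ) * Rr) = 0 := by
      intro l hl
      have hfac : f - (P : PowerSeries ℂ) * Rr = (Qs * f - (P : PowerSeries ℂ)) * Rr := by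
        rw [sub_mul, mul_comm Qs f, mul_assoc, hQR, mul_one]
      rw [hfac, PowerSeries.coeff_mul]
      apply Finset.sum_eq_zero
      intro p hp
      rw [Finset.HasAntidiagonal.mem_antidiagonal] at hp
      rw [hcoeff p.1 (by omega), zero_mul]
    intro d hd
    rw [hdiv, ← PowerSeries.coe_sub, PowerSeries.coeff_coe]
    by_cases hdneg : d < 0
    · rw [if_pos hdneg]
    · rw [if_neg hdneg]
      apply key
      have h1 : (d.natAbs : ℤ) = d := Int.natAbs_of_nonneg (not_lt.mp hdneg)
      omega
  · -- Part 2: existence of a Padé pair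
    set M := jacobiMat f n m with hM
    have hdet := jacobiMat_det_ne f n m hH
    set b : Fin m → ℂ := fun i => -(PowerSeries.coeff (n + 1 + i.val) f) with hb
    set c : Fin m → ℂ := M⁻¹.mulVec b with hc
    have hMc : M.mulVec c = b := by
      rw [hc, Matrix.mulVec_mulVec,
        Matrix.mul_nonsing_inv M (isUnit_iff_ne_zero.mpr hdet), Matrix.one_mulVec]
    set q : ℕ → ℂ := fun k =>
      match k with
      | 0 => 1
      | k + 1 => if h : k < m then c ⟨k, h⟩ else 0 with hq
    set Q : Polynomial ℂ := ∑ k ∈ Finset.range (m + 1), Polynomial.C (q k) * Polynomial.X ^ k with hQ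
    have hQcoeff : ∀ k, Q.coeff k = if k < m + 1 then q k else 0 := by
      intro k
      rw [hQ, Polynomial.finset_sum_coeff]
      simp only [Polynomial.coeff_C_mul, Polynomial.coeff_X_pow, mul_ite, mul_one, mul_zero]
      simp [Finset.sum_ite_eq, Finset.mem_range]
    have hQ0 : Q.coeff 0 = 1 := by rw [hQcoeff]; simp [hq]
    have hQne : Q ≠ 0 := fun h => by simp [h] at hQ0
    have hQd : Q.natDegree ≤ m := by
      rw [Polynomial.natDegree_le_iff_coeff_eq_zero]
      intro N hN
      rw [hQcoeff, if_neg (by omega)]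
    set P : Polynomial ℂ := trunc (n + 1) ((Q : PowerSeries ℂ) * f) with hP
    have hPd : P.natDegree ≤ n := Nat.lt_succ_iff.mp (natDegree_trunc_lt _ n)
    refine ⟨Q, P, hQne, hQd, hPd, ?_⟩
    intro l hl
    rw [map_sub, Polynomial.coeff_coe, hP, coeff_trunc]
    by_cases hln : l < n + 1
    · rw [if_pos hln, sub_self]
    · rw [if_neg hln, sub_zero]
      have him : l - (n + 1) < m := by omega
      set i : Fin m := ⟨l - (n + 1), him⟩ with hi
      have hli : l = n + 1 + i.val := by simp [hi]; omega
      rw [hli, coeff_mul_poly f n m Q hQd i, hQ0, one_mul]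
      have hcj : ∀ j : Fin m, Q.coeff (j.val + 1) = c j := by
        intro j
        rw [hQcoeff, if_pos (by omega)]
        simp only [hq]
        rw [dif_pos j.isLt]
      have hsum : ∑ j : Fin m, Q.coeff (j.val + 1) * jacobiMat f n m i j
          = M.mulVec c i := by
        show _ = ∑ j, M i j * c j
        exact Finset.sum_congr rfl fun j _ => by rw [hcj j, mul_comm, hM]
      rw [hsum, hMc, hb]
      ring
end

section
/- (Multiple analogue of Jacobi's theorem.) Let m⃗ ≠ (0,…,0) and suppose H_{n,m⃗} ≠ 0. Then every Hermite–Padé solution (Q, P_1,…,P_k) for (n, m⃗) satisfies Q(0) ≠ 0, and for every j the formal Laurent series f_j − P_j/Q (quotient in ℂ((z))) has zero coefficients in all degrees ≤ n+m. Consequently Hermite–Jacobi solutions for (n, m⃗) exist, any two Hermite–Jacobi solutions (Q̂, P̂_1,…,P̂_k) and (Q̂′, P̂′_1,…,P̂′_k) define the same rational functions (P̂_j·Q̂′ = P̂′_j·Q̂ as polynomials for every j), and each Hermite–Jacobi approximation coincides with the corresponding Hermite–Padé approximation. -/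
open Polynomial PowerSeries

/-- A Hermite–Padé solution for `(n, m⃗)` and the system `f`: `Q ≠ 0`, `deg Q ≤ m`,
`deg P_j ≤ n_j = n + m − m_j`, and `Q·f_j − P_j = O(z^{n+m+1})` for every `j`. -/
def IsHermitePadeSolution {k : ℕ} (f : Fin k → PowerSeries ℂ) (n : ℕ) (mv : Fin k → ℕ)
    (Q : Polynomial ℂ) (P : Fin k → Polynomial ℂ) : Prop :=
  Q ≠ 0 ∧ Q.natDegree ≤ ∑ i, mv i ∧
    (∀ j, (P j).natDegree ≤ n + (∑ i, mv i) - mv j) ∧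
    ∀ j, ∀ l ≤ n + ∑ i, mv i,
      PowerSeries.coeff l ((Q : PowerSeries ℂ) * f j - (P j : PowerSeries ℂ)) = 0

/-- A Hermite–Jacobi solution for `(n, m⃗)`: `Q̂ ≠ 0`, `deg Q̂ ≤ m`, `deg P̂_j ≤ n_j`, and
in `ℂ((z))` each `f_j − P̂_j/Q̂` has zero coefficients in all degrees `≤ n + m`. -/
def IsHermiteJacobiSolution {k : ℕ} (f : Fin k → PowerSeries ℂ) (n : ℕ) (mv : Fin k → ℕ)
    (Q : Polynomial ℂ) (P : Fin k → Polynomial ℂ) : Prop :=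
  Q ≠ 0 ∧ Q.natDegree ≤ ∑ i, mv i ∧
    (∀ j, (P j).natDegree ≤ n + (∑ i, mv i) - mv j) ∧
    ∀ j, ∀ d : ℤ, d ≤ ((n + ∑ i, mv i : ℕ) : ℤ) →
      HahnSeries.coeff
        ((f j : LaurentSeries ℂ) -
          ((P j : PowerSeries ℂ) : LaurentSeries ℂ) / ((Q : PowerSeries ℂ) : LaurentSeries ℂ))
        d = 0

/-- The multiple Hadamard-type determinant `H_{n,m⃗}`: the determinant of the `m × m`
matrix whose rows are grouped in `k` consecutive blocks (block `j` has `m_j` rows), the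
`i`-th row (`i = 0, …, m_j − 1`) of block `j` being
`(f^j_{n−m_j+i+1}, f^j_{n−m_j+i+2}, …, f^j_{n−m_j+i+m})`, with `f^j_p = 0` for `p < 0`.
Row `r` belongs to block `j` iff `T j ≤ r < T j + m_j` where `T j = m_1 + ⋯ + m_{j-1}`. -/
noncomputable def multiHadamardDet {k : ℕ} (f : Fin k → PowerSeries ℂ) (n : ℕ)
    (mv : Fin k → ℕ) : ℂ :=
  Matrix.det (fun r q : Fin (∑ i, mv i) =>
    ∑ j : Fin k,
      if (∑ i : Fin k, if i < j then mv i else 0) ≤ r.val ∧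
          r.val < (∑ i : Fin k, if i < j then mv i else 0) + mv j then
        (if n + 1 + (r.val - ∑ i : Fin k, if i < j then mv i else 0) + q.val < mv j then 0
         else PowerSeries.coeff
            (n + 1 + (r.val - ∑ i : Fin k, if i < j then mv i else 0) + q.val - mv j) (f j))
      else 0)

namespace MJTaux

variable {k : ℕ} (f : Fin k → PowerSeries ℂ) (n : ℕ) (mv : Fin k → ℕ)

/-- partial sums of the block sizes -/
def T (mv : Fin k → ℕ) (j : Fin k) : ℕ := ∑ i : Fin k, if i < j then mv i else 0

lemma T_add (j : Fin k) : T mv j + mv j = ∑ i : Fin k, if i ≤ j then mv i else 0 := by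
  have h : ∀ i : Fin k, (if i ≤ j then mv i else 0)
      = (if i < j then mv i else 0) + (if i = j then mv i else 0) := by
    intro i
    rcases eq_or_ne i j with rfl | hne
    · simp
    · by_cases hlt : i < j
      · simp [hlt, hlt.le, hne]
      · have hle : ¬ i ≤ j := fun h' => hlt (lt_of_le_of_ne h' hne)
        simp [hlt, hne, hle]
  rw [Finset.sum_congr rfl (fun i _ => h i), Finset.sum_add_distrib]
  simp [T]

lemma T_add_le (j : Fin k) : T mv j + mv j ≤ ∑ i, mv i := by
  rw [T_add]
  refine Finset.sum_le_sum fun i _ => ?_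
  split <;> simp

lemma T_succ_le {j j' : Fin k} (h : j < j') : T mv j + mv j ≤ T mv j' := by
  rw [T_add]
  refine Finset.sum_le_sum fun i _ => ?_
  by_cases hij : i ≤ j
  · simp [hij, lt_of_le_of_lt hij h, T]
  · simp only [hij, if_false]
    positivity

lemma block_exists (r : Fin (∑ i, mv i)) :
    ∃ j : Fin k, T mv j ≤ r.val ∧ r.val < T mv j + mv j := by
  rcases Nat.eq_zero_or_pos k with hk | hk
  · exfalso; subst hk; exact absurd r.2 (by simp)
  · have h0mem : (⟨0, hk⟩ : Fin k) ∈ Finset.univ.filter (fun j : Fin k => T mv j ≤ r.val) := by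
      have : T mv ⟨0, hk⟩ = 0 :=
        Finset.sum_eq_zero (fun i _ => by simp [Fin.lt_def])
      simp [this]
    have hne : (Finset.univ.filter (fun j : Fin k => T mv j ≤ r.val)).Nonempty := ⟨_, h0mem⟩
    set j := (Finset.univ.filter (fun j : Fin k => T mv j ≤ r.val)).max' hne with hjdef
    have hj : T mv j ≤ r.val :=
      (Finset.mem_filter.mp (Finset.max'_mem _ hne)).2
    refine ⟨j, hj, ?_⟩
    by_contra hcon
    push_neg at hcon
    by_cases htop : j.val + 1 < k
    · have hTeq : T mv ⟨j.val + 1, htop⟩ = T mv j + mv j := by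
        rw [T_add]
        refine Finset.sum_congr rfl fun i _ => ?_
        have : i < (⟨j.val + 1, htop⟩ : Fin k) ↔ i ≤ j := by
          rw [Fin.lt_def, Fin.le_def]
          show i.val < j.val + 1 ↔ i.val ≤ j.val
          omega
        rw [if_congr this rfl rfl]
      have hmem : (⟨j.val + 1, htop⟩ : Fin k) ∈
          Finset.univ.filter (fun j : Fin k => T mv j ≤ r.val) := by
        rw [Finset.mem_filter]
        exact ⟨Finset.mem_univ _, by rw [hTeq]; exact hcon⟩
      have := Finset.le_max' _ _ hmem
      rw [← hjdef] at this
      rw [Fin.le_def] at this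
      simp at this
    · have hall : (∑ i, mv i) ≤ T mv j + mv j := by
        rw [T_add]
        refine le_of_eq (Finset.sum_congr rfl fun i _ => ?_).symm
        have : i ≤ j := by rw [Fin.le_def]; omega
        simp [this]
      have := r.2
      omega

lemma block_unique {r : ℕ} {j j' : Fin k} (h1 : T mv j ≤ r) (h2 : r < T mv j + mv j)
    (h1' : T mv j' ≤ r) (h2' : r < T mv j' + mv j') : j = j' := by
  by_contra hne
  rcases lt_or_gt_of_ne hne with h | h
  · have := T_succ_le mv h; omega
  · have := T_succ_le mv h; omega

noncomputable def blk (r : Fin (∑ i, mv i)) : Fin k := (block_exists mv r).choose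

lemma blk_spec (r : Fin (∑ i, mv i)) :
    T mv (blk mv r) ≤ r.val ∧ r.val < T mv (blk mv r) + mv (blk mv r) :=
  (block_exists mv r).choose_spec


lemma coeff_Xpow_mul (φ : PowerSeries ℂ) (s t : ℕ) :
    PowerSeries.coeff t (PowerSeries.X ^ s * φ)
      = if t < s then 0 else PowerSeries.coeff (t - s) φ := by
  rw [PowerSeries.coeff_X_pow_mul']
  by_cases h : s ≤ t
  · simp [h, Nat.not_lt.mpr h]
  · simp [h, Nat.lt_of_not_le h]

noncomputable def Hmat : Matrix (Fin (∑ i, mv i)) (Fin (∑ i, mv i)) ℂ :=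
  fun r q : Fin (∑ i, mv i) =>
    ∑ j : Fin k,
      if (∑ i : Fin k, if i < j then mv i else 0) ≤ r.val ∧
          r.val < (∑ i : Fin k, if i < j then mv i else 0) + mv j then
        (if n + 1 + (r.val - ∑ i : Fin k, if i < j then mv i else 0) + q.val < mv j then 0
         else PowerSeries.coeff
            (n + 1 + (r.val - ∑ i : Fin k, if i < j then mv i else 0) + q.val - mv j) (f j))
      else 0

lemma Hmat_apply (r q : Fin (∑ i, mv i)) (j : Fin k)
    (h1 : T mv j ≤ r.val) (h2 : r.val < T mv j + mv j) :
    Hmat f n mv r q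
      = PowerSeries.coeff (n + 1 + (r.val - T mv j) + q.val)
          (PowerSeries.X ^ (mv j) * f j) := by
  rw [Hmat, Finset.sum_eq_single j]
  · rw [if_pos ⟨h1, h2⟩, coeff_Xpow_mul]
    rfl
  · intro j' _ hne
    rw [if_neg]
    rintro ⟨a, b⟩
    exact hne (block_unique mv a b h1 h2)
  · intro h; exact absurd (Finset.mem_univ j) h

lemma coeff_polymul (Q : Polynomial ℂ) (M : ℕ) (hQ : Q.natDegree ≤ M)
    (φ : PowerSeries ℂ) (L : ℕ) (hL : M ≤ L) :
    PowerSeries.coeff L ((Q : PowerSeries ℂ) * φ)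
      = ∑ p ∈ Finset.range (M + 1), Q.coeff p * PowerSeries.coeff (L - p) φ := by
  have h1 : PowerSeries.coeff L ((Q : PowerSeries ℂ) * φ)
      = ∑ p ∈ Finset.range (L + 1), Q.coeff p * PowerSeries.coeff (L - p) φ := by
    rw [PowerSeries.coeff_mul, Finset.Nat.sum_antidiagonal_eq_sum_range_succ_mk]
    exact Finset.sum_congr rfl fun p _ => by rw [Polynomial.coeff_coe]
  rw [h1]
  refine (Finset.sum_subset (Finset.range_subset_range.mpr (by omega)) (fun p hp hnp => ?_)).symm
  simp only [Finset.mem_range] at hp hnp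
  rw [Polynomial.coeff_eq_zero_of_natDegree_lt (by omega), zero_mul]

lemma key (Q : Polynomial ℂ) (hQ : Q.natDegree ≤ ∑ i, mv i) (r : Fin (∑ i, mv i)) (j : Fin k)
    (h1 : T mv j ≤ r.val) (h2 : r.val < T mv j + mv j) :
    PowerSeries.coeff (n + (∑ i, mv i) + 1 + (r.val - T mv j))
        ((Q : PowerSeries ℂ) * (PowerSeries.X ^ (mv j) * f j))
      = Q.coeff 0 * PowerSeries.coeff (n + 1 + (r.val - T mv j) + (∑ i, mv i))
            (PowerSeries.X ^ (mv j) * f j)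
        + (Hmat f n mv).mulVec (fun q => Q.coeff ((∑ i, mv i) - q.val)) r := by
  have hmulvec : (Hmat f n mv).mulVec (fun q => Q.coeff ((∑ i, mv i) - q.val)) r
      = ∑ q ∈ Finset.range (∑ i, mv i),
          PowerSeries.coeff (n + 1 + (r.val - T mv j) + q) (PowerSeries.X ^ (mv j) * f j)
            * Q.coeff ((∑ i, mv i) - q) := by
    rw [Matrix.mulVec, dotProduct]
    rw [Finset.sum_congr rfl (fun q _ => by rw [Hmat_apply f n mv r q j h1 h2])]
    exact Fin.sum_univ_eq_sum_range
      (fun q => PowerSeries.coeff (n + 1 + (r.val - T mv j) + q)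
          (PowerSeries.X ^ (mv j) * f j) * Q.coeff ((∑ i, mv i) - q)) _
  rw [hmulvec]
  rw [coeff_polymul Q (∑ i, mv i) hQ _ _ (by omega)]
  rw [Finset.sum_range_succ']
  rw [← Finset.sum_range_reflect]
  rw [add_comm]
  congr 1
  · have e0 : n + (∑ i, mv i) + 1 + (r.val - T mv j) - 0
        = n + 1 + (r.val - T mv j) + (∑ i, mv i) := by omega
    rw [e0]
  · refine Finset.sum_congr rfl fun i hi => ?_
    simp only [Finset.mem_range] at hi
    have e1 : (∑ i, mv i) - 1 - i + 1 = (∑ i, mv i) - i := by omega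
    have e2 : n + (∑ i, mv i) + 1 + (r.val - T mv j) - ((∑ i, mv i) - i)
        = n + 1 + (r.val - T mv j) + i := by omega
    rw [e1, e2, mul_comm]


lemma coeff_shift (ψ φ : PowerSeries ℂ) (s l : ℕ) :
    PowerSeries.coeff (l + s) (ψ * (PowerSeries.X ^ s * φ))
      = PowerSeries.coeff l (ψ * φ) := by
  rw [show ψ * (PowerSeries.X ^ s * φ) = PowerSeries.X ^ s * (ψ * φ) by ring,
    PowerSeries.coeff_X_pow_mul]

lemma mv_le (j : Fin k) : mv j ≤ ∑ i, mv i :=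
  Finset.single_le_sum (fun i _ => Nat.zero_le (mv i)) (Finset.mem_univ j)

/-- the row conditions satisfied by a Hermite–Padé solution -/
lemma sol_row (Q : Polynomial ℂ) (P : Fin k → Polynomial ℂ)
    (hs : IsHermitePadeSolution f n mv Q P) (r : Fin (∑ i, mv i)) (j : Fin k)
    (h1 : T mv j ≤ r.val) (h2 : r.val < T mv j + mv j) :
    PowerSeries.coeff (n + (∑ i, mv i) + 1 + (r.val - T mv j))
      ((Q : PowerSeries ℂ) * (PowerSeries.X ^ (mv j) * f j)) = 0 := by
  obtain ⟨hQ0, hQd, hPd, hc⟩ := hs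
  have hr' : r.val - T mv j < mv j := by omega
  have hmj : mv j ≤ ∑ i, mv i := mv_le mv j
  have hl : n + (∑ i, mv i) + 1 + (r.val - T mv j)
      = (n + (∑ i, mv i) + 1 + (r.val - T mv j) - mv j) + mv j := by omega
  rw [hl, coeff_shift]
  set d := n + (∑ i, mv i) + 1 + (r.val - T mv j) - mv j with hd
  have hd1 : d ≤ n + ∑ i, mv i := by omega
  have hd2 : n + (∑ i, mv i) - mv j < d := by omega
  have hP : PowerSeries.coeff d ((P j : PowerSeries ℂ)) = 0 := by
    rw [Polynomial.coeff_coe]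
    exact Polynomial.coeff_eq_zero_of_natDegree_lt (lt_of_le_of_lt (hPd j) hd2)
  have hcd := hc j d hd1
  have expand : PowerSeries.coeff d ((Q : PowerSeries ℂ) * f j)
      = PowerSeries.coeff d ((Q : PowerSeries ℂ) * f j - (P j : PowerSeries ℂ))
        + PowerSeries.coeff d ((P j : PowerSeries ℂ)) := by
    rw [map_sub]; ring
  rw [expand, hcd, hP, add_zero]

/-- the column-`m` entries (the inhomogeneous part) -/
noncomputable def Erow (r : Fin (∑ i, mv i)) : ℂ :=
  PowerSeries.coeff (n + 1 + (r.val - T mv (blk mv r)) + (∑ i, mv i))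
    (PowerSeries.X ^ (mv (blk mv r)) * f (blk mv r))

lemma sol_mulVec (Q : Polynomial ℂ) (P : Fin k → Polynomial ℂ)
    (hs : IsHermitePadeSolution f n mv Q P) (r : Fin (∑ i, mv i)) :
    (Hmat f n mv).mulVec (fun q => Q.coeff ((∑ i, mv i) - q.val)) r
      = -(Q.coeff 0 * Erow f n mv r) := by
  obtain ⟨hb1, hb2⟩ := blk_spec mv r
  have hk2 := key f n mv Q hs.2.1 r (blk mv r) hb1 hb2
  rw [sol_row f n mv Q P hs r (blk mv r) hb1 hb2] at hk2
  rw [Erow]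
  linear_combination -hk2

lemma det_Hmat (hH : multiHadamardDet f n mv ≠ 0) : (Hmat f n mv).det ≠ 0 := hH

lemma coeff_zero_ne (hH : multiHadamardDet f n mv ≠ 0)
    (Q : Polynomial ℂ) (P : Fin k → Polynomial ℂ)
    (hs : IsHermitePadeSolution f n mv Q P) : Q.coeff 0 ≠ 0 := by
  intro h0
  have hv : (Hmat f n mv).mulVec (fun q => Q.coeff ((∑ i, mv i) - q.val)) = 0 := by
    funext r
    rw [sol_mulVec f n mv Q P hs r, h0, zero_mul, neg_zero, Pi.zero_apply]
  have hv0 := Matrix.eq_zero_of_mulVec_eq_zero (det_Hmat f n mv hH) hv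
  refine hs.1 ?_
  ext p
  rw [Polynomial.coeff_zero]
  rcases Nat.eq_zero_or_pos p with rfl | hp
  · exact h0
  by_cases hpm : p ≤ ∑ i, mv i
  · have := congrFun hv0 ⟨(∑ i, mv i) - p, by omega⟩
    simp only [Pi.zero_apply] at this
    rw [show (∑ i, mv i) - ((∑ i, mv i) - p) = p by omega] at this
    exact this
  · exact Polynomial.coeff_eq_zero_of_natDegree_lt (lt_of_le_of_lt hs.2.1 (by omega))


lemma laurent_of_pade (φ : PowerSeries ℂ) (N : ℕ) (Q Pp : Polynomial ℂ)
    (hQ0 : Q.coeff 0 ≠ 0)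
    (hcond : ∀ l ≤ N,
      PowerSeries.coeff l ((Q : PowerSeries ℂ) * φ - (Pp : PowerSeries ℂ)) = 0) :
    ∀ d : ℤ, d ≤ (N : ℤ) →
      HahnSeries.coeff
        ((φ : LaurentSeries ℂ) -
          ((Pp : PowerSeries ℂ) : LaurentSeries ℂ) / ((Q : PowerSeries ℂ) : LaurentSeries ℂ))
        d = 0 := by
  have hc : PowerSeries.constantCoeff (Q : PowerSeries ℂ) ≠ 0 := by
    rwa [← PowerSeries.coeff_zero_eq_constantCoeff_apply, Polynomial.coeff_coe]
  have hQSne : (Q : PowerSeries ℂ) ≠ 0 := fun h => hc (by rw [h]; simp)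
  have hQL : (((Q : PowerSeries ℂ) : LaurentSeries ℂ)) ≠ 0 := by
    intro h
    exact hQSne (HahnSeries.ofPowerSeries_injective
      (show HahnSeries.ofPowerSeries ℤ ℂ (Q : PowerSeries ℂ)
          = HahnSeries.ofPowerSeries ℤ ℂ 0 by simpa using h))
  have hdiv : ((Pp : PowerSeries ℂ) : LaurentSeries ℂ) / ((Q : PowerSeries ℂ) : LaurentSeries ℂ)
      = (((Pp : PowerSeries ℂ) * (Q : PowerSeries ℂ)⁻¹ : PowerSeries ℂ) : LaurentSeries ℂ) := by
    rw [div_eq_iff hQL, ← PowerSeries.coe_mul, mul_assoc,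
      PowerSeries.inv_mul_cancel _ hc, mul_one]
  intro d hd
  rw [hdiv, ← PowerSeries.coe_sub, PowerSeries.coeff_coe]
  split_ifs with hneg
  · rfl
  · have hdn : d.natAbs ≤ N := by omega
    have hid : φ - (Pp : PowerSeries ℂ) * (Q : PowerSeries ℂ)⁻¹
        = ((Q : PowerSeries ℂ) * φ - (Pp : PowerSeries ℂ)) * (Q : PowerSeries ℂ)⁻¹ := by
      have h1 : (Q : PowerSeries ℂ) * (Q : PowerSeries ℂ)⁻¹ = 1 :=
        PowerSeries.mul_inv_cancel _ hc
      calc φ - (Pp : PowerSeries ℂ) * (Q : PowerSeries ℂ)⁻¹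
          = φ * ((Q : PowerSeries ℂ) * (Q : PowerSeries ℂ)⁻¹)
            - (Pp : PowerSeries ℂ) * (Q : PowerSeries ℂ)⁻¹ := by rw [h1, mul_one]
        _ = ((Q : PowerSeries ℂ) * φ - (Pp : PowerSeries ℂ)) * (Q : PowerSeries ℂ)⁻¹ := by
            ring
    rw [hid, PowerSeries.coeff_mul]
    refine Finset.sum_eq_zero fun p hp => ?_
    rw [Finset.HasAntidiagonal.mem_antidiagonal] at hp
    rw [hcond p.1 (by omega), zero_mul]

lemma pade_of_jacobi (φ : PowerSeries ℂ) (N : ℕ) (Q Pp : Polynomial ℂ) (hQ : Q ≠ 0)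
    (hcond : ∀ d : ℤ, d ≤ (N : ℤ) →
      HahnSeries.coeff
        ((φ : LaurentSeries ℂ) -
          ((Pp : PowerSeries ℂ) : LaurentSeries ℂ) / ((Q : PowerSeries ℂ) : LaurentSeries ℂ))
        d = 0) :
    ∀ l ≤ N, PowerSeries.coeff l ((Q : PowerSeries ℂ) * φ - (Pp : PowerSeries ℂ)) = 0 := by
  have hQS : (Q : PowerSeries ℂ) ≠ 0 := by
    intro h
    exact hQ (Polynomial.coe_eq_zero_iff.mp h)
  have hQL : (((Q : PowerSeries ℂ) : LaurentSeries ℂ)) ≠ 0 := by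
    intro h
    exact hQS (HahnSeries.ofPowerSeries_injective
      (show HahnSeries.ofPowerSeries ℤ ℂ (Q : PowerSeries ℂ)
          = HahnSeries.ofPowerSeries ℤ ℂ 0 by simpa using h))
  set E := (φ : LaurentSeries ℂ) -
      ((Pp : PowerSeries ℂ) : LaurentSeries ℂ) / ((Q : PowerSeries ℂ) : LaurentSeries ℂ)
    with hE
  have hQE : ((((Q : PowerSeries ℂ) * φ - (Pp : PowerSeries ℂ)) : PowerSeries ℂ) : LaurentSeries ℂ)
      = ((Q : PowerSeries ℂ) : LaurentSeries ℂ) * E := by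
    rw [hE, mul_sub]
    have hcancel : ((Q : PowerSeries ℂ) : LaurentSeries ℂ) *
        (((Pp : PowerSeries ℂ) : LaurentSeries ℂ) / ((Q : PowerSeries ℂ) : LaurentSeries ℂ))
        = ((Pp : PowerSeries ℂ) : LaurentSeries ℂ) := by
      field_simp
    rw [hcancel, PowerSeries.coe_sub, PowerSeries.coe_mul]
  intro l hl
  have hrw : PowerSeries.coeff l ((Q : PowerSeries ℂ) * φ - (Pp : PowerSeries ℂ))
      = HahnSeries.coeff
          ((((Q : PowerSeries ℂ) * φ - (Pp : PowerSeries ℂ) : PowerSeries ℂ)) : LaurentSeries ℂ)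
          (l : ℤ) := (LaurentSeries.coeff_coe_powerSeries _ l).symm
  rw [hrw, hQE]
  rcases eq_or_ne E 0 with h0 | hEne
  · rw [h0, mul_zero]; rfl
  · have hEord : (N : ℤ) < E.order := by
      by_contra hcon
      push_neg at hcon
      exact (mt HahnSeries.coeff_order_eq_zero.mp hEne) (hcond E.order hcon)
    have hQord : 0 ≤ (((Q : PowerSeries ℂ) : LaurentSeries ℂ)).order := by
      by_contra hcon
      push_neg at hcon
      have h2 := (mt HahnSeries.coeff_order_eq_zero.mp hQL)
      rw [PowerSeries.coeff_coe] at h2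
      simp [hcon] at h2
    refine HahnSeries.coeff_eq_zero_of_lt_order ?_
    rw [HahnSeries.order_mul hQL hEne]
    have hl' : (l : ℤ) ≤ (N : ℤ) := by exact_mod_cast hl
    omega

lemma coeff_P_of_sol (Q : Polynomial ℂ) (P : Fin k → Polynomial ℂ)
    (hs : IsHermitePadeSolution f n mv Q P) (j : Fin k) (l : ℕ) (hl : l ≤ n + ∑ i, mv i) :
    (P j).coeff l = PowerSeries.coeff l ((Q : PowerSeries ℂ) * f j) := by
  have h := hs.2.2.2 j l hl
  rw [map_sub] at h
  rw [← Polynomial.coeff_coe]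
  exact (sub_eq_zero.mp h).symm

lemma pade_unique (hH : multiHadamardDet f n mv ≠ 0) (Q Q' : Polynomial ℂ)
    (P P' : Fin k → Polynomial ℂ) (hs : IsHermitePadeSolution f n mv Q P)
    (hs' : IsHermitePadeSolution f n mv Q' P') (j : Fin k) : P j * Q' = P' j * Q := by
  have hQ0 := coeff_zero_ne f n mv hH Q P hs
  have hQ0' := coeff_zero_ne f n mv hH Q' P' hs'
  have hker : ∀ q : Fin (∑ i, mv i),
      Q'.coeff 0 * Q.coeff ((∑ i, mv i) - q.val)
        = Q.coeff 0 * Q'.coeff ((∑ i, mv i) - q.val) := by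
    have hmv0 : (Hmat f n mv).mulVec
        (fun q => Q'.coeff 0 * Q.coeff ((∑ i, mv i) - q.val)
          - Q.coeff 0 * Q'.coeff ((∑ i, mv i) - q.val)) = 0 := by
      funext r
      have e : (Hmat f n mv).mulVec
          (fun q => Q'.coeff 0 * Q.coeff ((∑ i, mv i) - q.val)
            - Q.coeff 0 * Q'.coeff ((∑ i, mv i) - q.val)) r
          = Q'.coeff 0 * (Hmat f n mv).mulVec (fun q => Q.coeff ((∑ i, mv i) - q.val)) r
            - Q.coeff 0 * (Hmat f n mv).mulVec (fun q => Q'.coeff ((∑ i, mv i) - q.val)) r := by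
        rw [Matrix.mulVec, Matrix.mulVec, Matrix.mulVec, dotProduct, dotProduct,
          dotProduct, Finset.mul_sum, Finset.mul_sum, ← Finset.sum_sub_distrib]
        exact Finset.sum_congr rfl fun q _ => by ring
      rw [e, sol_mulVec f n mv Q P hs r, sol_mulVec f n mv Q' P' hs' r, Pi.zero_apply]
      ring
    have h0 := Matrix.eq_zero_of_mulVec_eq_zero (det_Hmat f n mv hH) hmv0
    intro q
    have h := congrFun h0 q
    simp only [Pi.zero_apply] at h
    linear_combination h
  have hQQ : Polynomial.C (Q'.coeff 0) * Q = Polynomial.C (Q.coeff 0) * Q' := by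
    ext p
    rw [Polynomial.coeff_C_mul, Polynomial.coeff_C_mul]
    rcases Nat.eq_zero_or_pos p with rfl | hp
    · ring
    by_cases hpm : p ≤ ∑ i, mv i
    · have h := hker ⟨(∑ i, mv i) - p, by omega⟩
      rw [show (∑ i, mv i) - ((∑ i, mv i) - p) = p by omega] at h
      exact h
    · rw [show Q.coeff p = 0 from Polynomial.coeff_eq_zero_of_natDegree_lt
          (by have := hs.2.1; omega),
        show Q'.coeff p = 0 from Polynomial.coeff_eq_zero_of_natDegree_lt
          (by have := hs'.2.1; omega),
        mul_zero, mul_zero]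
  have hPP : Polynomial.C (Q'.coeff 0) * P j = Polynomial.C (Q.coeff 0) * P' j := by
    ext p
    rw [Polynomial.coeff_C_mul, Polynomial.coeff_C_mul]
    by_cases hpm : p ≤ n + ∑ i, mv i
    · rw [coeff_P_of_sol f n mv Q P hs j p hpm, coeff_P_of_sol f n mv Q' P' hs' j p hpm]
      have h : PowerSeries.coeff p
            (((Polynomial.C (Q'.coeff 0) * Q : Polynomial ℂ) : PowerSeries ℂ) * f j)
          = PowerSeries.coeff p
            (((Polynomial.C (Q.coeff 0) * Q' : Polynomial ℂ) : PowerSeries ℂ) * f j) := by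
        rw [hQQ]
      rw [Polynomial.coe_mul, Polynomial.coe_mul, Polynomial.coe_C, Polynomial.coe_C,
        mul_assoc, mul_assoc, PowerSeries.coeff_C_mul, PowerSeries.coeff_C_mul] at h
      exact h
    · rw [show (P j).coeff p = 0 from Polynomial.coeff_eq_zero_of_natDegree_lt
          (by have := hs.2.2.1 j; have := mv_le mv j; omega),
        show (P' j).coeff p = 0 from Polynomial.coeff_eq_zero_of_natDegree_lt
          (by have := hs'.2.2.1 j; have := mv_le mv j; omega),
        mul_zero, mul_zero]
  have hc : Polynomial.C (Q.coeff 0) * Polynomial.C (Q'.coeff 0) ≠ 0 := by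
    rw [← Polynomial.C_mul, Ne, Polynomial.C_eq_zero]
    exact mul_ne_zero hQ0 hQ0'
  apply mul_left_cancel₀ hc
  calc Polynomial.C (Q.coeff 0) * Polynomial.C (Q'.coeff 0) * (P j * Q')
      = (Polynomial.C (Q'.coeff 0) * P j) * (Polynomial.C (Q.coeff 0) * Q') := by ring
    _ = (Polynomial.C (Q.coeff 0) * P' j) * (Polynomial.C (Q'.coeff 0) * Q) := by
        rw [hPP, ← hQQ]
    _ = Polynomial.C (Q.coeff 0) * Polynomial.C (Q'.coeff 0) * (P' j * Q) := by ring

lemma pade_exists (hH : multiHadamardDet f n mv ≠ 0) :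
    ∃ (Q : Polynomial ℂ) (P : Fin k → Polynomial ℂ), IsHermitePadeSolution f n mv Q P := by
  have hdet : IsUnit (Hmat f n mv).det := isUnit_iff_ne_zero.mpr (det_Hmat f n mv hH)
  set v := (Hmat f n mv)⁻¹.mulVec (fun r => -(Erow f n mv r)) with hv
  have hHv : (Hmat f n mv).mulVec v = fun r => -(Erow f n mv r) := by
    rw [hv, Matrix.mulVec_mulVec, Matrix.mul_nonsing_inv _ hdet, Matrix.one_mulVec]
  set Q : Polynomial ℂ :=
    1 + ∑ q : Fin (∑ i, mv i), Polynomial.C (v q) * Polynomial.X ^ ((∑ i, mv i) - q.val)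
    with hQdef
  have hQ0 : Q.coeff 0 = 1 := by
    rw [hQdef, Polynomial.coeff_add, Polynomial.coeff_one, Polynomial.finset_sum_coeff]
    rw [Finset.sum_eq_zero fun q _ => ?_]
    · simp
    · have := q.isLt
      rw [Polynomial.coeff_C_mul, Polynomial.coeff_X_pow, if_neg (by omega), mul_zero]
  have hQd : Q.natDegree ≤ ∑ i, mv i := by
    rw [hQdef]
    refine le_trans (Polynomial.natDegree_add_le _ _) (max_le (by simp) ?_)
    exact Polynomial.natDegree_sum_le_of_forall_le _ _ fun q _ =>
      le_trans (Polynomial.natDegree_C_mul_X_pow_le _ _) (by omega)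
  have hQc : ∀ q : Fin (∑ i, mv i), Q.coeff ((∑ i, mv i) - q.val) = v q := by
    intro q
    have hq := q.isLt
    rw [hQdef, Polynomial.coeff_add, Polynomial.coeff_one, if_neg (by omega),
      Polynomial.finset_sum_coeff]
    rw [Finset.sum_eq_single q]
    · rw [Polynomial.coeff_C_mul, Polynomial.coeff_X_pow, if_pos rfl, mul_one, zero_add]
    · intro q' _ hne
      rw [Polynomial.coeff_C_mul, Polynomial.coeff_X_pow, if_neg, mul_zero]
      intro he
      refine hne (Fin.ext ?_)
      have := q'.isLt
      omega
    · intro h; exact absurd (Finset.mem_univ q) h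
  have hrow : ∀ r : Fin (∑ i, mv i),
      PowerSeries.coeff (n + (∑ i, mv i) + 1 + (r.val - T mv (blk mv r)))
        ((Q : PowerSeries ℂ) * (PowerSeries.X ^ (mv (blk mv r)) * f (blk mv r))) = 0 := by
    intro r
    obtain ⟨hb1, hb2⟩ := blk_spec mv r
    rw [key f n mv Q hQd r (blk mv r) hb1 hb2]
    have hvq : (fun q : Fin (∑ i, mv i) => Q.coeff ((∑ i, mv i) - q.val)) = v := funext hQc
    rw [hvq, hHv, hQ0]
    simp [Erow]
  have hwin : ∀ j : Fin k, ∀ l, n + (∑ i, mv i) - mv j < l → l ≤ n + ∑ i, mv i →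
      PowerSeries.coeff l ((Q : PowerSeries ℂ) * f j) = 0 := by
    intro j l hl1 hl2
    have hmj : mv j ≤ ∑ i, mv i := mv_le mv j
    have hmj0 : 0 < mv j := by omega
    have hr'lt : l - (n + (∑ i, mv i) + 1 - mv j) < mv j := by omega
    have hrlt : T mv j + (l - (n + (∑ i, mv i) + 1 - mv j)) < ∑ i, mv i := by
      have := T_add_le mv j
      omega
    set r : Fin (∑ i, mv i) := ⟨T mv j + (l - (n + (∑ i, mv i) + 1 - mv j)), hrlt⟩ with hrdef
    have h1 : T mv j ≤ r.val := by simp [hrdef]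
    have h2 : r.val < T mv j + mv j := by simp only [hrdef]; omega
    have hthis := hrow r
    have hbr : blk mv r = j := block_unique mv (blk_spec mv r).1 (blk_spec mv r).2 h1 h2
    rw [hbr] at hthis
    have hval : r.val - T mv j = l - (n + (∑ i, mv i) + 1 - mv j) := by
      simp only [hrdef]; omega
    rw [hval, show n + (∑ i, mv i) + 1 + (l - (n + (∑ i, mv i) + 1 - mv j)) = l + mv j
      by omega, coeff_shift] at hthis
    exact hthis
  refine ⟨Q, fun j => PowerSeries.trunc (n + (∑ i, mv i) - mv j + 1)
    ((Q : PowerSeries ℂ) * f j), ?_, hQd, ?_, ?_⟩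
  · intro h; rw [h] at hQ0; simp at hQ0
  · intro j
    exact Nat.lt_succ_iff.mp (PowerSeries.natDegree_trunc_lt _ _)
  · intro j l hl
    rw [map_sub, Polynomial.coeff_coe, PowerSeries.coeff_trunc]
    split_ifs with hlt
    · exact sub_self _
    · rw [hwin j l (by omega) hl, sub_zero]


end MJTaux

/-- **Multiple analogue of Jacobi's theorem.** If `m⃗ ≠ 0` and `H_{n,m⃗} ≠ 0`, then every
Hermite–Padé solution `(Q, P_1, …, P_k)` satisfies `Q(0) ≠ 0` and each `f_j − P_j/Q` is
`O(z^{n+m+1})` in `ℂ((z))`; Hermite–Jacobi solutions exist; any two Hermite–Jacobi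
solutions define the same rational functions; and each Hermite–Jacobi approximation
coincides with the corresponding Hermite–Padé approximation. -/
theorem multiple_jacobi_theorem (k : ℕ) (hk : 1 ≤ k) (f : Fin k → PowerSeries ℂ)
    (n : ℕ) (mv : Fin k → ℕ) (hmv : mv ≠ 0) (hH : multiHadamardDet f n mv ≠ 0) :
    (∀ (Q : Polynomial ℂ) (P : Fin k → Polynomial ℂ),
      IsHermitePadeSolution f n mv Q P →
        Q.eval 0 ≠ 0 ∧
        ∀ j, ∀ d : ℤ, d ≤ ((n + ∑ i, mv i : ℕ) : ℤ) →
          HahnSeries.coeff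
            ((f j : LaurentSeries ℂ) -
              ((P j : PowerSeries ℂ) : LaurentSeries ℂ) /
                ((Q : PowerSeries ℂ) : LaurentSeries ℂ)) d = 0) ∧
    (∃ (Q : Polynomial ℂ) (P : Fin k → Polynomial ℂ),
      IsHermiteJacobiSolution f n mv Q P) ∧
    (∀ (Q Q' : Polynomial ℂ) (P P' : Fin k → Polynomial ℂ),
      IsHermiteJacobiSolution f n mv Q P → IsHermiteJacobiSolution f n mv Q' P' →
        ∀ j, P j * Q' = P' j * Q) ∧
    (∀ (Q Q' : Polynomial ℂ) (P P' : Fin k → Polynomial ℂ),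
      IsHermiteJacobiSolution f n mv Q P → IsHermitePadeSolution f n mv Q' P' →
        ∀ j, P j * Q' = P' j * Q) := by
    classical
  have part1 : ∀ (Q : Polynomial ℂ) (P : Fin k → Polynomial ℂ),
      IsHermitePadeSolution f n mv Q P →
        Q.eval 0 ≠ 0 ∧
        ∀ j, ∀ d : ℤ, d ≤ ((n + ∑ i, mv i : ℕ) : ℤ) →
          HahnSeries.coeff
            ((f j : LaurentSeries ℂ) -
              ((P j : PowerSeries ℂ) : LaurentSeries ℂ) /
                ((Q : PowerSeries ℂ) : LaurentSeries ℂ)) d = 0 := by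
    intro Q P hs
    have hQ0 := MJTaux.coeff_zero_ne f n mv hH Q P hs
    refine ⟨by rwa [← Polynomial.coeff_zero_eq_eval_zero], fun j => ?_⟩
    exact MJTaux.laurent_of_pade (f j) (n + ∑ i, mv i) Q (P j) hQ0
      (fun l hl => hs.2.2.2 j l hl)
  have jac_to_pade : ∀ (Q : Polynomial ℂ) (P : Fin k → Polynomial ℂ),
      IsHermiteJacobiSolution f n mv Q P → IsHermitePadeSolution f n mv Q P := by
    intro Q P h
    exact ⟨h.1, h.2.1, h.2.2.1, fun j l hl =>
      MJTaux.pade_of_jacobi (f j) (n + ∑ i, mv i) Q (P j) h.1 (h.2.2.2 j) l hl⟩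
  refine ⟨part1, ?_, ?_, ?_⟩
  · obtain ⟨Q, P, hs⟩ := MJTaux.pade_exists f n mv hH
    exact ⟨Q, P, hs.1, hs.2.1, hs.2.2.1, fun j => (part1 Q P hs).2 j⟩
  · intro Q Q' P P' h h' j
    exact MJTaux.pade_unique f n mv hH Q Q' P P'
      (jac_to_pade Q P h) (jac_to_pade Q' P' h') j
  · intro Q Q' P P' h h' j
    exact MJTaux.pade_unique f n mv hH Q Q' P P' (jac_to_pade Q P h) h' j
end

section
/- If the system (f_1,…,f_k) is quite perfect, then for every index n ∈ ℕ and every multi-index m⃗ ∈ ℕ^k Hermite–Jacobi solutions exist, and every Hermite–Padé solution (Q, P_1,…,P_k) for (n, m⃗) satisfies: for every j, the formal Laurent series f_j − P_j/Q (quotient in ℂ((z))) has zero coefficients in all degrees ≤ n+m; i.e. the Hermite–Jacobi approximations exist and coincide with the Hermite–Padé approximations. -/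
open Polynomial PowerSeries

/-- The system `f` is *quite perfect* if for every multi-index `(n, m⃗)` every
Hermite–Padé solution satisfies `deg Q = m`, `deg P_j = n_j` and `gcd(Q, P_j) = 1`. -/
def QuitePerfect {k : ℕ} (f : Fin k → PowerSeries ℂ) : Prop :=
  ∀ (n : ℕ) (mv : Fin k → ℕ) (Q : Polynomial ℂ) (P : Fin k → Polynomial ℂ),
    IsHermitePadeSolution f n mv Q P →
      Q.degree = ((∑ i, mv i : ℕ) : WithBot ℕ) ∧
      ∀ j, (P j).degree = ((n + (∑ i, mv i) - mv j : ℕ) : WithBot ℕ) ∧ IsCoprime Q (P j)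

lemma HJ_coeff_neg (x : PowerSeries ℂ) {d : ℤ} (hd : d < 0) :
    HahnSeries.coeff ((x : LaurentSeries ℂ)) d = 0 := by
  rw [HahnSeries.ofPowerSeries_apply]
  apply HahnSeries.embDomain_notin_range
  rintro ⟨m, hm⟩
  simp only [Nat.castOrderEmbedding_apply] at hm
  omega

lemma HJ_key {k : ℕ} (f : Fin k → PowerSeries ℂ) (hf : QuitePerfect f)
    (n : ℕ) (mv : Fin k → ℕ) (Q : Polynomial ℂ) (P : Fin k → Polynomial ℂ)
    (hsol : IsHermitePadeSolution f n mv Q P) :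
    ∀ j, ∀ d : ℤ, d ≤ ((n + ∑ i, mv i : ℕ) : ℤ) →
      HahnSeries.coeff
        ((f j : LaurentSeries ℂ) -
          ((P j : PowerSeries ℂ) : LaurentSeries ℂ) /
            ((Q : PowerSeries ℂ) : LaurentSeries ℂ)) d = 0 := by
  intro j d hd
  obtain ⟨hQ0, hdQ, hdP, hco⟩ := hsol
  obtain ⟨-, hj⟩ := hf n mv Q P ⟨hQ0, hdQ, hdP, hco⟩
  have hcop : IsCoprime Q (P j) := (hj j).2
  set N := n + ∑ i, mv i with hN
  -- constant coefficient of Q is nonzero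
  have hc0 : Q.coeff 0 ≠ 0 := by
    intro h
    have h1 := hco j 0 (Nat.zero_le _)
    have h2 : PowerSeries.coeff 0 ((Q : PowerSeries ℂ) * f j) = 0 := by
      simp [PowerSeries.coeff_mul, Polynomial.coeff_coe, h]
    have h3 : (P j).coeff 0 = 0 := by
      rw [map_sub, h2, Polynomial.coeff_coe] at h1
      simpa using h1.symm
    exact Polynomial.not_isUnit_X
      (hcop.isUnit_of_dvd' (Polynomial.X_dvd_iff.2 h) (Polynomial.X_dvd_iff.2 h3))
  have hconst : PowerSeries.constantCoeff (Q : PowerSeries ℂ) ≠ 0 := by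
    simpa using hc0
  have hu : (Q : PowerSeries ℂ) * (Q : PowerSeries ℂ)⁻¹ = 1 :=
    PowerSeries.mul_inv_cancel _ hconst
  set W : PowerSeries ℂ := ((Q : PowerSeries ℂ) * f j - (P j : PowerSeries ℂ)) *
      (Q : PowerSeries ℂ)⁻¹ with hW
  have hWc : ∀ l ≤ N, PowerSeries.coeff l W = 0 := by
    intro l hl
    rw [hW, PowerSeries.coeff_mul]
    apply Finset.sum_eq_zero
    rintro ⟨a, b⟩ hab
    rw [Finset.HasAntidiagonal.mem_antidiagonal] at hab
    rw [hco j a (by omega), zero_mul]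
  -- turn the Laurent series expression into the image of W
  have hQL : ((Q : PowerSeries ℂ) : LaurentSeries ℂ) ≠ 0 := by
    intro h
    apply hconst
    have := HahnSeries.ofPowerSeries_injective (Γ := ℤ) (R := ℂ)
      (by simpa using h : HahnSeries.ofPowerSeries ℤ ℂ (Q : PowerSeries ℂ) = HahnSeries.ofPowerSeries ℤ ℂ 0)
    simp [this]
  have hmapu : ((Q : PowerSeries ℂ) : LaurentSeries ℂ) *
      (((Q : PowerSeries ℂ)⁻¹ : PowerSeries ℂ) : LaurentSeries ℂ) = 1 := by
    rw [← PowerSeries.coe_mul, hu, PowerSeries.coe_one]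
  have hinv : (((Q : PowerSeries ℂ)⁻¹ : PowerSeries ℂ) : LaurentSeries ℂ) =
      ((Q : PowerSeries ℂ) : LaurentSeries ℂ)⁻¹ :=
    eq_inv_of_mul_eq_one_left (by rw [mul_comm] at hmapu; exact hmapu)
  have hWL : ((W : PowerSeries ℂ) : LaurentSeries ℂ) =
      (f j : LaurentSeries ℂ) -
        ((P j : PowerSeries ℂ) : LaurentSeries ℂ) / ((Q : PowerSeries ℂ) : LaurentSeries ℂ) := by
    rw [hW, PowerSeries.coe_mul, PowerSeries.coe_sub, PowerSeries.coe_mul, hinv]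
    field_simp
  rw [← hWL]
  rcases lt_or_ge d 0 with hneg | hpos
  · exact HJ_coeff_neg _ hneg
  · obtain ⟨l, rfl⟩ := Int.eq_ofNat_of_zero_le hpos
    rw [HahnSeries.ofPowerSeries_apply_coeff]
    exact hWc l (by exact_mod_cast hd)

lemma HJ_coe_smul (c : ℂ) (p : Polynomial ℂ) :
    ((c • p : Polynomial ℂ) : PowerSeries ℂ) = c • (p : PowerSeries ℂ) := by
  ext n
  simp [Polynomial.coeff_coe]

lemma HJ_natDegree_le {p : Polynomial ℂ} {d : ℕ} (hp : p ∈ Polynomial.degreeLT ℂ (d + 1)) :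
    p.natDegree ≤ d := by
  rcases eq_or_ne p 0 with rfl | h
  · simp
  · have h1 := Polynomial.mem_degreeLT.1 hp
    have := (Polynomial.natDegree_lt_iff_degree_lt h).2 (by exact_mod_cast h1)
    omega

lemma HJ_exists {k : ℕ} (f : Fin k → PowerSeries ℂ) (n : ℕ) (mv : Fin k → ℕ) :
    ∃ (Q : Polynomial ℂ) (P : Fin k → Polynomial ℂ), IsHermitePadeSolution f n mv Q P := by
  classical
  set m := ∑ i, mv i with hm
  set N := n + m with hNdef
  set D : Fin k → ℕ := fun j => n + m - mv j with hD
  -- linear maps producing polynomials from coefficient vectors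
  set A : (Fin (m + 1) → ℂ) →ₗ[ℂ] Polynomial ℂ :=
    (Polynomial.degreeLT ℂ (m + 1)).subtype.comp
      (Polynomial.degreeLTEquiv ℂ (m + 1)).symm.toLinearMap with hA
  set B : (j : Fin k) → ((Fin (D j + 1) → ℂ) →ₗ[ℂ] Polynomial ℂ) := fun j =>
    (Polynomial.degreeLT ℂ (D j + 1)).subtype.comp
      (Polynomial.degreeLTEquiv ℂ (D j + 1)).symm.toLinearMap with hB
  have hAinj : Function.Injective A := by
    apply Function.Injective.comp (Submodule.injective_subtype _)
    exact (Polynomial.degreeLTEquiv ℂ (m + 1)).symm.injective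
  have hBinj : ∀ j, Function.Injective (B j) := by
    intro j
    apply Function.Injective.comp (Submodule.injective_subtype _)
    exact (Polynomial.degreeLTEquiv ℂ (D j + 1)).symm.injective
  have hAmem : ∀ v, A v ∈ Polynomial.degreeLT ℂ (m + 1) := fun v => Subtype.coe_prop _
  have hBmem : ∀ j w, B j w ∈ Polynomial.degreeLT ℂ (D j + 1) := fun j w => Subtype.coe_prop _
  -- the linear map whose kernel encodes Hermite–Padé solutions
  set L : ((Fin (m + 1) → ℂ) × ((j : Fin k) → Fin (D j + 1) → ℂ)) →ₗ[ℂ]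
      (Fin k → Fin (N + 1) → ℂ) :=
    { toFun := fun v j l =>
        PowerSeries.coeff l ((A v.1 : PowerSeries ℂ) * f j - (B j (v.2 j) : PowerSeries ℂ))
      map_add' := by
        intro x y
        funext j l
        simp only [map_add, Polynomial.coe_add, Prod.fst_add, Prod.snd_add, Pi.add_apply]
        all_goals rw [add_mul, add_sub_add_comm, map_add]
      map_smul' := by
        intro c x
        funext j l
        simp only [map_smul, Prod.smul_fst, Prod.smul_snd, Pi.smul_apply, RingHom.id_apply,
          HJ_coe_smul, smul_mul_assoc, ← smul_sub] } with hL
  -- dimension count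
  have hrank : Module.finrank ℂ (Fin k → Fin (N + 1) → ℂ) <
      Module.finrank ℂ ((Fin (m + 1) → ℂ) × ((j : Fin k) → Fin (D j + 1) → ℂ)) := by
    have e1 : Module.finrank ℂ (Fin k → Fin (N + 1) → ℂ) = ∑ _j : Fin k, (N + 1) := by
      rw [Module.finrank_pi_fintype]
      simp [Module.finrank_fin_fun]
    have e2 : Module.finrank ℂ ((j : Fin k) → Fin (D j + 1) → ℂ) = ∑ j : Fin k, (D j + 1) := by
      rw [Module.finrank_pi_fintype]
      simp [Module.finrank_fin_fun]
    have e3 : Module.finrank ℂ (Fin (m + 1) → ℂ) = m + 1 := Module.finrank_fin_fun ℂ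
    rw [Module.finrank_prod, e1, e2, e3]
    have h1 : ∀ j : Fin k, (N + 1 : ℕ) ≤ (D j + 1) + mv j := by
      intro j
      have : mv j ≤ m := Finset.single_le_sum (fun i _ => Nat.zero_le (mv i)) (Finset.mem_univ j)
      simp only [hD]
      omega
    calc ∑ _j : Fin k, (N + 1) ≤ ∑ j : Fin k, ((D j + 1) + mv j) :=
          Finset.sum_le_sum fun j _ => h1 j
      _ = (∑ j : Fin k, (D j + 1)) + m := by rw [Finset.sum_add_distrib, hm]
      _ < m + 1 + ∑ j : Fin k, (D j + 1) := by omega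
  have hninj : ¬ Function.Injective L := fun h =>
    absurd (LinearMap.finrank_le_finrank_of_injective h) (not_le.2 hrank)
  rw [← LinearMap.ker_eq_bot] at hninj
  obtain ⟨v, hvmem, hvne⟩ := Submodule.exists_mem_ne_zero_of_ne_bot hninj
  have hLv : ∀ j l, PowerSeries.coeff (l : Fin (N + 1))
      ((A v.1 : PowerSeries ℂ) * f j - (B j (v.2 j) : PowerSeries ℂ)) = 0 := by
    have := LinearMap.mem_ker.1 hvmem
    intro j l
    exact congrFun (congrFun this j) l
  -- coefficient vanishing for all l ≤ N
  have hcoeff : ∀ j, ∀ l ≤ N, PowerSeries.coeff l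
      ((A v.1 : PowerSeries ℂ) * f j - (B j (v.2 j) : PowerSeries ℂ)) = 0 := by
    intro j l hl
    have := hLv j ⟨l, by omega⟩
    simpa using this
  -- Q ≠ 0
  have hQne : A v.1 ≠ 0 := by
    intro hQ0
    apply hvne
    have hP0 : ∀ j, B j (v.2 j) = 0 := by
      intro j
      have hdeg : (B j (v.2 j)).natDegree ≤ D j := HJ_natDegree_le (hBmem j _)
      ext l
      rcases le_or_gt l N with hl | hl
      · have := hcoeff j l hl
        rw [hQ0] at this
        simp only [Polynomial.coe_zero, zero_mul, zero_sub, map_neg, neg_eq_zero,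
          Polynomial.coeff_coe] at this
        exact this
      · exact Polynomial.coeff_eq_zero_of_natDegree_lt (by simp only [hD] at hdeg ⊢; omega)
    have h1 : v.1 = 0 := hAinj (by rw [hQ0, map_zero])
    have h2 : v.2 = 0 := by
      funext j
      simp only [Pi.zero_apply]
      exact hBinj j (by rw [hP0 j, map_zero])
    exact Prod.ext h1 h2
  refine ⟨A v.1, fun j => B j (v.2 j), hQne, HJ_natDegree_le (hAmem _), fun j =>
    HJ_natDegree_le (hBmem j _), hcoeff⟩

/-- If the system `(f_1, …, f_k)` is quite perfect, then for every `n` and every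
multi-index `m⃗` Hermite–Jacobi solutions exist, and every Hermite–Padé solution
`(Q, P_1, …, P_k)` satisfies: for every `j` the formal Laurent series `f_j − P_j/Q`
has zero coefficients in all degrees `≤ n + m`; i.e. the Hermite–Jacobi approximations
exist and coincide with the Hermite–Padé approximations. -/
theorem hermite_jacobi_of_quite_perfect (k : ℕ) (hk : 1 ≤ k)
    (f : Fin k → PowerSeries ℂ) (hf : QuitePerfect f) :
    ∀ (n : ℕ) (mv : Fin k → ℕ),
      (∃ (Q : Polynomial ℂ) (P : Fin k → Polynomial ℂ),
        IsHermiteJacobiSolution f n mv Q P) ∧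
      (∀ (Q : Polynomial ℂ) (P : Fin k → Polynomial ℂ),
        IsHermitePadeSolution f n mv Q P →
          ∀ j, ∀ d : ℤ, d ≤ ((n + ∑ i, mv i : ℕ) : ℤ) →
            HahnSeries.coeff
              ((f j : LaurentSeries ℂ) -
                ((P j : PowerSeries ℂ) : LaurentSeries ℂ) /
                  ((Q : PowerSeries ℂ) : LaurentSeries ℂ)) d = 0) := by
  refine fun n mv => ⟨?_, fun Q P h => HJ_key f hf n mv Q P h⟩
  obtain ⟨Q, P, hsol⟩ := HJ_exists f n mv
  exact ⟨Q, P, hsol.1, hsol.2.1, hsol.2.2.1, HJ_key f hf n mv Q P hsol⟩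
end

section
/- (Criterion for trigonometric Hermite–Padé polynomials.) Let m⃗ ≠ (0,…,0). Problem A^t for (n, m⃗) and (c^1,…,c^k) has a unique solution — meaning any two solutions (u, v^1,…,v^k) and (u′, v′^1,…,v′^k) satisfy (u′, v′^1,…,v′^k) = λ·(u, v^1,…,v^k) for some nonzero λ ∈ ℂ — if and only if the multi-index (n, m⃗) is weakly normal, i.e. rank H^t_{n,m⃗} = 2m. -/
open Finset

/-- A solution of Problem `A^t` for `(n, m⃗)` and the system of trigonometric series given
in complex form by `c j : ℤ → ℂ`. -/
def IsTrigSolution {k : ℕ} (c : Fin k → ℤ → ℂ) (n : ℕ) (mv : Fin k → ℕ)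
    (u : ℤ → ℂ) (v : Fin k → ℤ → ℂ) : Prop :=
  u ≠ 0 ∧
  (∀ p : ℤ, ((∑ i, mv i : ℕ) : ℤ) < |p| → u p = 0) ∧
  (∀ j, ∀ l : ℤ, ((n + (∑ i, mv i) - mv j : ℕ) : ℤ) < |l| → v j l = 0) ∧
  (∀ j, ∀ l : ℤ, |l| ≤ ((n + ∑ i, mv i : ℕ) : ℤ) →
    ∑ p ∈ Finset.Icc (-((∑ i, mv i : ℕ) : ℤ)) ((∑ i, mv i : ℕ) : ℤ),
      c j (l - p) * u p = v j l)

/-- The `(2m) × (2m+1)` matrix `H^t_{n,m⃗}`: its columns are indexed by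
`p = q − m ∈ {−m, …, m}` (`q : Fin (2m+1)`), its rows by the pairs `(j, l)` with
`1 ≤ j ≤ k`, `m_j ≥ 1` and `l ∈ {−(n_j+m_j), …, −(n_j+1)} ∪ {n_j+1, …, n_j+m_j}`
(encoded as `Sum.inl ⟨j,i⟩ ↦ l = n_j+1+i` and `Sum.inr ⟨j,i⟩ ↦ l = −(n_j+1+i)`,
`i : Fin (m_j)`), and its `((j,l), p)` entry is `c^j_{l−p}`. -/
def trigHMatrix {k : ℕ} (c : Fin k → ℤ → ℂ) (n : ℕ) (mv : Fin k → ℕ) :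
    Matrix ((Σ j : Fin k, Fin (mv j)) ⊕ (Σ j : Fin k, Fin (mv j)))
      (Fin (2 * (∑ i, mv i) + 1)) ℂ :=
  fun r q =>
    match r with
    | Sum.inl ⟨j, i⟩ =>
        c j ((((n + (∑ i', mv i') - mv j : ℕ) : ℤ) + 1 + (i : ℤ)) -
          ((q : ℤ) - ((∑ i', mv i' : ℕ) : ℤ)))
    | Sum.inr ⟨j, i⟩ =>
        c j ((-(((n + (∑ i', mv i') - mv j : ℕ) : ℤ) + 1 + (i : ℤ))) -
          ((q : ℤ) - ((∑ i', mv i' : ℕ) : ℤ)))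

private lemma sum_Icc_fin (m : ℕ) (f : ℤ → ℂ) :
    ∑ p ∈ Finset.Icc (-(m:ℤ)) (m:ℤ), f p = ∑ q : Fin (2*m+1), f ((q:ℤ) - m) := by
  have h : Finset.Icc (-(m:ℤ)) (m:ℤ)
      = (Finset.range (2*m+1)).map ⟨fun q : ℕ => (q:ℤ) - m, fun a b hab => by
          dsimp only at hab; omega⟩ := by
    ext p
    simp only [Finset.mem_Icc, Finset.mem_map, Finset.mem_range, Function.Embedding.coeFn_mk]
    constructor
    · intro hp; exact ⟨(p + m).toNat, by omega, show ((p + m).toNat : ℤ) - m = p by omega⟩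
    · rintro ⟨q, hq, rfl⟩; show -(m:ℤ) ≤ (q:ℤ) - m ∧ (q:ℤ) - m ≤ m; omega
  rw [h, Finset.sum_map, Fin.sum_univ_eq_sum_range (fun q : ℕ => f ((q:ℤ) - m))]
  rfl

/-- The coefficient sequence determined by a column vector. -/
private noncomputable def uOf {k : ℕ} (mv : Fin k → ℕ)
    (x : Fin (2 * (∑ i, mv i) + 1) → ℂ) : ℤ → ℂ :=
  fun p => ∑ q : Fin (2 * (∑ i, mv i) + 1),
    if p = (q:ℤ) - ((∑ i, mv i : ℕ) : ℤ) then x q else 0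

private lemma uOf_apply {k : ℕ} (mv : Fin k → ℕ) (x : Fin (2 * (∑ i, mv i) + 1) → ℂ)
    (q : Fin (2 * (∑ i, mv i) + 1)) :
    uOf mv x ((q:ℤ) - ((∑ i, mv i : ℕ) : ℤ)) = x q := by
  unfold uOf
  rw [Finset.sum_eq_single q]
  · simp
  · intro b _ hb
    rw [if_neg]
    intro h
    exact hb (by ext; omega)
  · simp

private lemma uOf_zero {k : ℕ} (mv : Fin k → ℕ) (x : Fin (2 * (∑ i, mv i) + 1) → ℂ)
    (p : ℤ) (hp : ((∑ i, mv i : ℕ) : ℤ) < |p|) : uOf mv x p = 0 := by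
  unfold uOf
  apply Finset.sum_eq_zero
  intro q _
  rw [if_neg]
  have := q.isLt
  rcases abs_cases p with ⟨h1, h2⟩ | ⟨h1, h2⟩ <;> omega

private lemma exists_fin {m : ℕ} (p : ℤ) (hp : |p| ≤ (m:ℤ)) :
    ∃ q : Fin (2*m+1), (q:ℤ) - (m:ℤ) = p := by
  rcases abs_cases p with ⟨h1, h2⟩ | ⟨h1, h2⟩
  · refine ⟨⟨(p + m).toNat, by omega⟩, ?_⟩
    show (((p + m).toNat : ℕ) : ℤ) - (m:ℤ) = p
    omega
  · refine ⟨⟨(p + m).toNat, by omega⟩, ?_⟩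
    show (((p + m).toNat : ℕ) : ℤ) - (m:ℤ) = p
    omega

private lemma row_eq {k : ℕ} (c : Fin k → ℤ → ℂ) (n : ℕ) (mv : Fin k → ℕ)
    (x : Fin (2 * (∑ i, mv i) + 1) → ℂ) (r) :
    (trigHMatrix c n mv).mulVec x r =
      ∑ q : Fin (2 * (∑ i, mv i) + 1), trigHMatrix c n mv r q * x q := rfl

/-- Any nonzero kernel vector yields a solution. -/
private lemma solution_of_ker {k : ℕ} (c : Fin k → ℤ → ℂ) (n : ℕ) (mv : Fin k → ℕ)
    (x : Fin (2 * (∑ i, mv i) + 1) → ℂ) (hx : x ≠ 0)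
    (hker : (trigHMatrix c n mv).mulVec x = 0) :
    IsTrigSolution c n mv (uOf mv x)
      (fun j l => if |l| ≤ ((n + ∑ i, mv i : ℕ) : ℤ) then
        ∑ p ∈ Finset.Icc (-((∑ i, mv i : ℕ) : ℤ)) ((∑ i, mv i : ℕ) : ℤ),
          c j (l - p) * uOf mv x p else 0) := by
  have hrow : ∀ r, ∑ q : Fin (2 * (∑ i, mv i) + 1), trigHMatrix c n mv r q * x q = 0 := by
    intro r
    have := congrFun hker r
    rw [row_eq] at this
    simpa using this
  have hj : ∀ j, mv j ≤ ∑ i, mv i := fun j => Finset.single_le_sum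
    (fun i _ => Nat.zero_le _) (Finset.mem_univ j)
  have hsum : ∀ j (l : ℤ),
      ∑ p ∈ Finset.Icc (-((∑ i, mv i : ℕ) : ℤ)) ((∑ i, mv i : ℕ) : ℤ),
          c j (l - p) * uOf mv x p
        = ∑ q : Fin (2 * (∑ i, mv i) + 1),
            c j (l - ((q:ℤ) - ((∑ i, mv i : ℕ) : ℤ))) * x q := by
    intro j l
    rw [sum_Icc_fin (∑ i, mv i) (fun p => c j (l - p) * uOf mv x p)]
    exact Finset.sum_congr rfl fun q _ => by rw [uOf_apply]
  refine ⟨?_, fun p hp => uOf_zero mv x p hp, ?_, ?_⟩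
  · obtain ⟨q, hq⟩ := Function.ne_iff.mp hx
    intro h
    apply hq
    have := congrFun h ((q:ℤ) - ((∑ i, mv i : ℕ) : ℤ))
    rwa [uOf_apply] at this
  · intro j l hl
    by_cases h1 : |l| ≤ ((n + ∑ i, mv i : ℕ) : ℤ)
    · beta_reduce
      rw [if_pos h1, hsum]
      rcases le_or_gt 0 l with h0 | h0
      · have hi : (l - ((n + (∑ i, mv i) - mv j : ℕ) : ℤ) - 1).toNat < mv j := by
          have := hj j
          rcases abs_cases l with ⟨ha1, ha2⟩ | ⟨ha1, ha2⟩ <;> omega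
        have hr := hrow (Sum.inl ⟨j, ⟨(l - ((n + (∑ i, mv i) - mv j : ℕ) : ℤ) - 1).toNat, hi⟩⟩)
        rw [← hr]
        apply Finset.sum_congr rfl
        intro q _
        show c j (l - _) * x q = c j ((((n + (∑ i, mv i) - mv j : ℕ) : ℤ) + 1 +
          ((((l - ((n + (∑ i, mv i) - mv j : ℕ) : ℤ) - 1).toNat : ℕ) : ℤ))) - _) * x q
        congr 2
        have := hj j
        rcases abs_cases l with ⟨ha1, ha2⟩ | ⟨ha1, ha2⟩ <;> omega
      · have hi : (-l - ((n + (∑ i, mv i) - mv j : ℕ) : ℤ) - 1).toNat < mv j := by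
          have := hj j
          rcases abs_cases l with ⟨ha1, ha2⟩ | ⟨ha1, ha2⟩ <;> omega
        have hr := hrow (Sum.inr ⟨j, ⟨(-l - ((n + (∑ i, mv i) - mv j : ℕ) : ℤ) - 1).toNat, hi⟩⟩)
        rw [← hr]
        apply Finset.sum_congr rfl
        intro q _
        show c j (l - _) * x q = c j ((-(((n + (∑ i, mv i) - mv j : ℕ) : ℤ) + 1 +
          ((((-l - ((n + (∑ i, mv i) - mv j : ℕ) : ℤ) - 1).toNat : ℕ) : ℤ)))) - _) * x q
        congr 2
        have := hj j
        rcases abs_cases l with ⟨ha1, ha2⟩ | ⟨ha1, ha2⟩ <;> omega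
    · beta_reduce
      rw [if_neg h1]
  · intro j l hl
    beta_reduce
    rw [if_pos hl]

/-- Any solution yields a nonzero kernel vector. -/
private lemma ker_of_solution {k : ℕ} (c : Fin k → ℤ → ℂ) (n : ℕ) (mv : Fin k → ℕ)
    (u : ℤ → ℂ) (v : Fin k → ℤ → ℂ) (hs : IsTrigSolution c n mv u v) :
    (trigHMatrix c n mv).mulVec (fun q => u ((q:ℤ) - ((∑ i, mv i : ℕ) : ℤ))) = 0 ∧
      (fun q : Fin (2 * (∑ i, mv i) + 1) => u ((q:ℤ) - ((∑ i, mv i : ℕ) : ℤ))) ≠ 0 := by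
  obtain ⟨hu0, husupp, hvsupp, heq⟩ := hs
  have hj : ∀ j, mv j ≤ ∑ i, mv i := fun j => Finset.single_le_sum
    (fun i _ => Nat.zero_le _) (Finset.mem_univ j)
  constructor
  · funext r
    rw [row_eq, Pi.zero_apply]
    have key : ∀ j (l : ℤ), ((n + (∑ i, mv i) - mv j : ℕ) : ℤ) < |l| →
        |l| ≤ ((n + ∑ i, mv i : ℕ) : ℤ) →
        ∑ q : Fin (2 * (∑ i, mv i) + 1),
          c j (l - ((q:ℤ) - ((∑ i, mv i : ℕ) : ℤ))) *
            u ((q:ℤ) - ((∑ i, mv i : ℕ) : ℤ)) = 0 := by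
      intro j l h1 h2
      rw [← sum_Icc_fin (∑ i, mv i) (fun p => c j (l - p) * u p), heq j l h2]
      exact hvsupp j l h1
    obtain (⟨j, i⟩ | ⟨j, i⟩) := r
    · have hK := key j (((n + (∑ i, mv i) - mv j : ℕ) : ℤ) + 1 + (i:ℤ))
        (by have := hj j; have := i.isLt
            rcases abs_cases (((n + (∑ i, mv i) - mv j : ℕ) : ℤ) + 1 + (i:ℤ)) with
              ⟨h1, h2⟩ | ⟨h1, h2⟩ <;> omega)
        (by have := hj j; have := i.isLt
            rcases abs_cases (((n + (∑ i, mv i) - mv j : ℕ) : ℤ) + 1 + (i:ℤ)) with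
              ⟨h1, h2⟩ | ⟨h1, h2⟩ <;> omega)
      rw [← hK]
      rfl
    · have hK := key j (-(((n + (∑ i, mv i) - mv j : ℕ) : ℤ) + 1 + (i:ℤ)))
        (by have := hj j; have := i.isLt
            rcases abs_cases (-(((n + (∑ i, mv i) - mv j : ℕ) : ℤ) + 1 + (i:ℤ))) with
              ⟨h1, h2⟩ | ⟨h1, h2⟩ <;> omega)
        (by have := hj j; have := i.isLt
            rcases abs_cases (-(((n + (∑ i, mv i) - mv j : ℕ) : ℤ) + 1 + (i:ℤ))) with
              ⟨h1, h2⟩ | ⟨h1, h2⟩ <;> omega)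
      rw [← hK]
      rfl
  · intro h
    apply hu0
    funext p
    by_cases hp : |p| ≤ ((∑ i, mv i : ℕ) : ℤ)
    · obtain ⟨q, hq⟩ := exists_fin p hp
      have := congrFun h q
      rw [hq] at this
      exact this
    · exact husupp p (by omega)

/-- **Criterion for trigonometric Hermite–Padé polynomials.**  For `m⃗ ≠ (0,…,0)`,
Problem `A^t` for `(n, m⃗)` and `(c^1, …, c^k)` has a unique solution up to a nonzero
complex scalar if and only if the multi-index `(n, m⃗)` is weakly normal, i.e.
`rank H^t_{n,m⃗} = 2m`. -/
theorem trig_hermite_pade_unique_iff_rank (k : ℕ) (hk : 1 ≤ k) (c : Fin k → ℤ → ℂ)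
    (hc : ∀ j, ∀ l : ℤ, c j (-l) = starRingEnd ℂ (c j l))
    (n : ℕ) (mv : Fin k → ℕ) (hmv : mv ≠ 0) :
    (∀ (u u' : ℤ → ℂ) (v v' : Fin k → ℤ → ℂ),
      IsTrigSolution c n mv u v → IsTrigSolution c n mv u' v' →
        ∃ lam : ℂ, lam ≠ 0 ∧ u' = lam • u ∧ ∀ j, v' j = lam • v j) ↔
    (trigHMatrix c n mv).rank = 2 * ∑ i, mv i := by
  classical
  set M := trigHMatrix c n mv with hM
  set K := LinearMap.ker M.mulVecLin with hK
  have hj : ∀ j, mv j ≤ ∑ i, mv i := fun j => Finset.single_le_sum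
    (fun i _ => Nat.zero_le _) (Finset.mem_univ j)
  have hmemK : ∀ x, x ∈ K ↔ M.mulVec x = 0 := by
    intro x
    rw [hK, LinearMap.mem_ker, Matrix.mulVecLin_apply]
  have hcard : Fintype.card ((Σ j : Fin k, Fin (mv j)) ⊕ (Σ j : Fin k, Fin (mv j)))
      = 2 * ∑ i, mv i := by
    simp [Fintype.card_sum, Fintype.card_sigma, two_mul]
  have hrank_le : M.rank ≤ 2 * ∑ i, mv i :=
    le_trans (Matrix.rank_le_card_height M) (le_of_eq hcard)
  have hrn : M.rank + Module.finrank ℂ K = 2 * (∑ i, mv i) + 1 := by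
    have h1 := LinearMap.finrank_range_add_finrank_ker M.mulVecLin
    rw [Module.finrank_fintype_fun_eq_card, Fintype.card_fin] at h1
    rw [Matrix.rank, hK]
    exact h1
  have hiff : M.rank = 2 * ∑ i, mv i ↔ Module.finrank ℂ K = 1 := by omega
  rw [hiff, finrank_eq_one_iff']
  constructor
  · -- uniqueness → dim 1
    intro huniq
    have hKne : ∃ x, x ∈ K ∧ x ≠ 0 := by
      have h1 : Module.finrank ℂ K ≠ 0 := by omega
      by_contra h
      push_neg at h
      have hbot : K = ⊥ := by
        rw [Submodule.eq_bot_iff]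
        intro x hx
        by_contra hx0
        exact hx0 (h x hx)
      rw [hbot, finrank_bot] at h1
      exact h1 rfl
    obtain ⟨x, hxK, hx0⟩ := hKne
    refine ⟨⟨x, hxK⟩, by simpa using hx0, ?_⟩
    rintro ⟨w, hwK⟩
    by_cases hw0 : w = 0
    · refine ⟨0, Subtype.ext ?_⟩
      simp [hw0]
    · have hsx := solution_of_ker c n mv x hx0 ((hmemK x).mp hxK)
      have hsw := solution_of_ker c n mv w hw0 ((hmemK w).mp hwK)
      obtain ⟨lam, hlam0, hu, _⟩ := huniq _ _ _ _ hsx hsw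
      refine ⟨lam, Subtype.ext ?_⟩
      funext q
      show (lam • x) q = w q
      have h1 := congrFun hu ((q:ℤ) - ((∑ i, mv i : ℕ) : ℤ))
      rw [uOf_apply] at h1
      simp only [Pi.smul_apply] at h1
      rw [uOf_apply] at h1
      simpa using h1.symm
  · -- dim 1 → uniqueness
    rintro ⟨⟨x₀, hx₀K⟩, hx₀0, hgen⟩ u u' v v' hs hs'
    obtain ⟨hker, hxne⟩ := ker_of_solution c n mv u v hs
    obtain ⟨hker', hxne'⟩ := ker_of_solution c n mv u' v' hs'
    obtain ⟨a, ha⟩ := hgen ⟨_, (hmemK _).mpr hker⟩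
    obtain ⟨b, hb⟩ := hgen ⟨_, (hmemK _).mpr hker'⟩
    have ha' : a • x₀ = fun q : Fin (2 * (∑ i, mv i) + 1) =>
        u ((q:ℤ) - ((∑ i, mv i : ℕ) : ℤ)) := congrArg Subtype.val ha
    have hb' : b • x₀ = fun q : Fin (2 * (∑ i, mv i) + 1) =>
        u' ((q:ℤ) - ((∑ i, mv i : ℕ) : ℤ)) := congrArg Subtype.val hb
    have ha0 : a ≠ 0 := by
      rintro rfl
      rw [zero_smul] at ha'
      exact hxne ha'.symm
    have hb0 : b ≠ 0 := by
      rintro rfl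
      rw [zero_smul] at hb'
      exact hxne' hb'.symm
    have hu' : u' = (b / a) • u := by
      funext p
      by_cases hp : |p| ≤ ((∑ i, mv i : ℕ) : ℤ)
      · obtain ⟨q, hq⟩ := exists_fin p hp
        have h1 := congrFun ha' q
        have h2 := congrFun hb' q
        simp only [Pi.smul_apply, smul_eq_mul, hq] at h1 h2
        simp only [Pi.smul_apply, smul_eq_mul]
        rw [h2.symm, ← h1]
        field_simp
      · obtain ⟨_, husupp, _, _⟩ := hs
        obtain ⟨_, husupp', _, _⟩ := hs'
        rw [husupp' p (by omega)]
        simp [husupp p (by omega)]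
    refine ⟨b / a, div_ne_zero hb0 ha0, hu', ?_⟩
    intro j
    obtain ⟨_, husupp, hvsupp, heq⟩ := hs
    obtain ⟨_, husupp', hvsupp', heq'⟩ := hs'
    funext l
    by_cases hl : |l| ≤ ((n + ∑ i, mv i : ℕ) : ℤ)
    · rw [← heq' j l hl]
      simp only [Pi.smul_apply, smul_eq_mul]
      rw [← heq j l hl, Finset.mul_sum]
      apply Finset.sum_congr rfl
      intro p _
      rw [hu']
      simp only [Pi.smul_apply, smul_eq_mul]
      ring
    · rw [hvsupp' j l (by have := hj j; omega)]
      simp [hvsupp j l (by have := hj j; omega)]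
end

section
/- (Determinant formulas for the solution of Problem A^t.) Let m⃗ ≠ (0,…,0) and suppose rank H^t_{n,m⃗} = 2m. Let M be the (2m+1)×(2m+1) matrix whose rows 1,…,m (top to bottom) are the rows of H^t_{n,m⃗} indexed by (j,l) with j = k, k−1, …, 1 and l = n_j+m_j, n_j+m_j−1, …, n_j+1, whose rows m+2,…,2m+1 are the rows indexed by (j,l) with j = 1, 2, …, k and l = −(n_j+1), −(n_j+2), …, −(n_j+m_j), and whose row m+1 is a free row; for p ∈ {−m,…,m} let u_p be the cofactor of the entry in row m+1 and the column indexed by p (so that inserting any row w in position m+1 gives det M = ∑_{p=−m}^m w_p u_p), and for l ∈ ℤ let d^j_l be the determinant of M with the row (c^j_{l−p})_{p=−m,…,m} inserted in position m+1. Then u is not identically zero, ∑_{p=−m}^m c^j_{l−p} u_p = d^j_l for every j and every l ∈ ℤ, d^j_l = 0 whenever n_j < |l| ≤ n+m, and the tuple (u, v^1,…,v^k) with v^j_l := d^j_l for |l| ≤ n_j and v^j_l := 0 otherwise is a solution of Problem A^t for (n, m⃗). -/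
open Finset

/-- The `(2m+1) × (2m+1)` matrix `M`  of Theorem 3, with the free row `w` inserted in
position `m + 1` (row index `m`, 0-based).  Columns are indexed by `p = q − m`,
`q : Fin (2m+1)`.  The top `m` rows are the rows of `H^t_{n,m⃗}` indexed by `(j, l)` with
`j = k, k−1, …, 1` and (within block `j`) `l = n_j+m_j, n_j+m_j−1, …, n_j+1`
(note `n_j + m_j = n + m`); block `j` of the top half occupies the rows `r` with
`S j ≤ r < S j + m_j`, where `S j = ∑_{j' > j} m_{j'}`, and the row at offset `s`
inside it has `l = n + m − s`.  The bottom `m` rows are the rows indexed by `(j, l)` with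
`j = 1, 2, …, k` and `l = −(n_j+1), −(n_j+2), …, −(n_j+m_j)`; block `j` of the bottom
half occupies the rows with offset `t ∈ [T j, T j + m_j)` below the middle row, where
`T j = ∑_{j' < j} m_{j'}`, and the row at offset `t` has `l = −(n_j + 1 + (t − T j))`.
The `(r, q)` entry of a row labelled by `(j, l)` is `c^j_{l − (q − m)}`. -/
noncomputable def trigM {k : ℕ} (c : Fin k → ℤ → ℂ) (n : ℕ) (mv : Fin k → ℕ)
    (w : Fin (2 * (∑ i, mv i) + 1) → ℂ) :
    Matrix (Fin (2 * (∑ i, mv i) + 1)) (Fin (2 * (∑ i, mv i) + 1)) ℂ :=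
  fun r q =>
    if r.val < ∑ i, mv i then
      ∑ j : Fin k,
        if (∑ i : Fin k, if j < i then mv i else 0) ≤ r.val ∧
            r.val < (∑ i : Fin k, if j < i then mv i else 0) + mv j then
          c j ((((n + ∑ i, mv i : ℕ) : ℤ) -
              ((r.val - ∑ i : Fin k, if j < i then mv i else 0 : ℕ) : ℤ)) -
            ((q : ℤ) - ((∑ i, mv i : ℕ) : ℤ)))
        else 0
    else if r.val = ∑ i, mv i then w q
    else
      ∑ j : Fin k,
        if (∑ i : Fin k, if i < j then mv i else 0) ≤ r.val - ((∑ i, mv i) + 1) ∧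
            r.val - ((∑ i, mv i) + 1) < (∑ i : Fin k, if i < j then mv i else 0) + mv j then
          c j ((-(((n + (∑ i, mv i) - mv j : ℕ) : ℤ) + 1 +
              ((r.val - ((∑ i, mv i) + 1) - ∑ i : Fin k, if i < j then mv i else 0 : ℕ) : ℤ))) -
            ((q : ℤ) - ((∑ i, mv i : ℕ) : ℤ)))
        else 0

/-- `u_p` : the cofactor of the entry in row `m+1` and column `p = q − m` of `M`,
obtained by inserting the standard basis row `e_q` in position `m+1`. -/
noncomputable def trigU {k : ℕ} (c : Fin k → ℤ → ℂ) (n : ℕ) (mv : Fin k → ℕ)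
    (q : Fin (2 * (∑ i, mv i) + 1)) : ℂ :=
  (trigM c n mv (fun q' => if q' = q then 1 else 0)).det

/-- `d^j_l` : the determinant of `M` with the row `(c^j_{l−p})_{p=−m,…,m}` inserted in
position `m+1`. -/
noncomputable def trigD {k : ℕ} (c : Fin k → ℤ → ℂ) (n : ℕ) (mv : Fin k → ℕ)
    (j : Fin k) (l : ℤ) : ℂ :=
  (trigM c n mv (fun q => c j (l - ((q : ℤ) - ((∑ i, mv i : ℕ) : ℤ))))).det
open Finset

section TrigAux

variable {k : ℕ}

private lemma trig_aux_split (mv : Fin k → ℕ) (b : Fin k) :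
    (∑ i, if b < i then mv i else 0) + mv b
      = ∑ i, ((if b < i then mv i else 0) + (if i = b then mv i else 0)) := by
  rw [Finset.sum_add_distrib, Finset.sum_ite_eq' Finset.univ b mv,
    if_pos (Finset.mem_univ b)]

private lemma trig_aux_split' (mv : Fin k → ℕ) (b : Fin k) :
    (∑ i, if i < b then mv i else 0) + mv b
      = ∑ i, ((if i < b then mv i else 0) + (if i = b then mv i else 0)) := by
  rw [Finset.sum_add_distrib, Finset.sum_ite_eq' Finset.univ b mv,
    if_pos (Finset.mem_univ b)]

private lemma trig_S_add_le (mv : Fin k → ℕ) {a b : Fin k} (h : a < b) :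
    (∑ i, if b < i then mv i else 0) + mv b ≤ ∑ i, if a < i then mv i else 0 := by
  rw [trig_aux_split]
  refine Finset.sum_le_sum fun i _ => ?_
  by_cases h2 : b < i
  · have h3 : a < i := h.trans h2
    have h4 : ¬ i = b := fun hh => absurd h2 (by simp [hh])
    simp [h2, h3, h4]
  · by_cases h5 : i = b
    · subst h5; simp [h2, h]
    · simp [h2, h5]

private lemma trig_S_le (mv : Fin k → ℕ) (b : Fin k) :
    (∑ i, if b < i then mv i else 0) + mv b ≤ ∑ i, mv i := by
  rw [trig_aux_split]
  refine Finset.sum_le_sum fun i _ => ?_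
  by_cases h2 : b < i
  · have h4 : ¬ i = b := fun hh => absurd h2 (by simp [hh])
    simp [h2, h4]
  · by_cases h5 : i = b
    · subst h5; simp [h2]
    · simp [h2, h5]

private lemma trig_T_add_le (mv : Fin k → ℕ) {a b : Fin k} (h : a < b) :
    (∑ i, if i < a then mv i else 0) + mv a ≤ ∑ i, if i < b then mv i else 0 := by
  rw [trig_aux_split']
  refine Finset.sum_le_sum fun i _ => ?_
  by_cases h2 : i < a
  · have h3 : i < b := h2.trans h
    have h4 : ¬ i = a := fun hh => absurd h2 (by simp [hh])
    simp [h2, h3, h4]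
  · by_cases h5 : i = a
    · subst h5; simp [h2, h]
    · simp [h2, h5]

private lemma trig_T_le (mv : Fin k → ℕ) (b : Fin k) :
    (∑ i, if i < b then mv i else 0) + mv b ≤ ∑ i, mv i := by
  rw [trig_aux_split']
  refine Finset.sum_le_sum fun i _ => ?_
  by_cases h2 : i < b
  · have h4 : ¬ i = b := fun hh => absurd h2 (by simp [hh])
    simp [h2, h4]
  · by_cases h5 : i = b
    · subst h5; simp [h2]
    · simp [h2, h5]

end TrigAux

section TrigRows

variable {k : ℕ}

/-- The reindexing of the rows of `H` into the non-middle rows of `M`. -/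
def trigRowIdx (mv : Fin k → ℕ) :
    ((Σ j : Fin k, Fin (mv j)) ⊕ (Σ j : Fin k, Fin (mv j))) → Fin (2 * (∑ i, mv i) + 1)
  | Sum.inl ⟨j, i⟩ => ⟨(∑ i', if j < i' then mv i' else 0) + (mv j - 1 - i), by
      have h1 := trig_S_le mv j
      have h2 := i.isLt
      omega⟩
  | Sum.inr ⟨j, i⟩ => ⟨(∑ i', mv i') + 1 + (∑ i', if i' < j then mv i' else 0) + i, by
      have h1 := trig_T_le mv j
      have h2 := i.isLt
      omega⟩

lemma trigRowIdx_val_ne (mv : Fin k → ℕ) (x) :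
    (trigRowIdx mv x).val ≠ ∑ i, mv i := by
  obtain ⟨j, i⟩ | ⟨j, i⟩ := x
  · simp only [trigRowIdx]
    have h1 := trig_S_le mv j
    have h2 := i.isLt
    omega
  · simp only [trigRowIdx]
    omega

lemma trigRowIdx_injective (mv : Fin k → ℕ) : Function.Injective (trigRowIdx mv) := by
  intro x y hxy
  have h := congrArg Fin.val hxy
  obtain ⟨j, i⟩ | ⟨j, i⟩ := x <;> obtain ⟨j', i'⟩ | ⟨j', i'⟩ := y <;>
    simp only [trigRowIdx] at h
  · have hi := i.isLt; have hi' := i'.isLt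
    have hjj : j = j' := by
      by_contra hne
      rcases Ne.lt_or_gt hne with hlt | hlt
      · have := trig_S_add_le mv hlt; omega
      · have := trig_S_add_le mv hlt; omega
    subst hjj
    have hii : i = i' := Fin.ext (by omega)
    rw [hii]
  · exfalso
    have h1 := trig_S_le mv j
    have h2 := i.isLt
    omega
  · exfalso
    have h1 := trig_S_le mv j'
    have h2 := i'.isLt
    omega
  · have hi := i.isLt; have hi' := i'.isLt
    have hjj : j = j' := by
      by_contra hne
      rcases Ne.lt_or_gt hne with hlt | hlt
      · have := trig_T_add_le mv hlt; omega
      · have := trig_T_add_le mv hlt; omega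
    subst hjj
    have hii : i = i' := Fin.ext (by omega)
    rw [hii]

lemma trigM_rowIdx (c : Fin k → ℤ → ℂ) (n : ℕ) (mv : Fin k → ℕ)
    (w : Fin (2 * (∑ i, mv i) + 1) → ℂ) (x) :
    trigM c n mv w (trigRowIdx mv x) = trigHMatrix c n mv x := by
  funext q
  obtain ⟨j, i⟩ | ⟨j, i⟩ := x
  · have hS := trig_S_le mv j
    have hi := i.isLt
    have hmvle : mv j ≤ ∑ i', mv i' := by omega
    simp only [trigM, trigRowIdx, trigHMatrix]
    refine (if_pos (by omega)).trans ?_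
    have h0 : ∀ b ∈ Finset.univ, b ≠ j →
        (if (∑ i' : Fin k, if b < i' then mv i' else 0) ≤
              (∑ i', if j < i' then mv i' else 0) + (mv j - 1 - ↑i) ∧
            (∑ i', if j < i' then mv i' else 0) + (mv j - 1 - ↑i) <
              (∑ i' : Fin k, if b < i' then mv i' else 0) + mv b then
          c b ((((n + ∑ i', mv i' : ℕ) : ℤ) -
              (((∑ i', if j < i' then mv i' else 0) + (mv j - 1 - ↑i) -
                ∑ i' : Fin k, if b < i' then mv i' else 0 : ℕ) : ℤ)) -
            ((q : ℤ) - ((∑ i', mv i' : ℕ) : ℤ)))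
        else 0) = 0 := by
      intro b _ hbj
      rcases hbj.lt_or_gt with hlt | hlt
      · have h3 := trig_S_add_le mv hlt
        exact if_neg (by omega)
      · have h3 := trig_S_add_le mv hlt
        exact if_neg (by omega)
    refine (Finset.sum_eq_single_of_mem j (Finset.mem_univ j) h0).trans ?_
    refine (if_pos (by constructor <;> omega)).trans ?_
    congr 1
    omega
  · have hT := trig_T_le mv j
    have hi := i.isLt
    have hmvle : mv j ≤ ∑ i', mv i' := by omega
    simp only [trigM, trigRowIdx, trigHMatrix]
    refine (if_neg (by omega)).trans ((if_neg (by omega)).trans ?_)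
    have h0 : ∀ b ∈ Finset.univ, b ≠ j →
        (if (∑ i' : Fin k, if i' < b then mv i' else 0) ≤
              (∑ i', mv i') + 1 + (∑ i', if i' < j then mv i' else 0) + ↑i -
                ((∑ i', mv i') + 1) ∧
            (∑ i', mv i') + 1 + (∑ i', if i' < j then mv i' else 0) + ↑i -
                ((∑ i', mv i') + 1) <
              (∑ i' : Fin k, if i' < b then mv i' else 0) + mv b then
          c b ((-(((n + (∑ i', mv i') - mv b : ℕ) : ℤ) + 1 +
              (((∑ i', mv i') + 1 + (∑ i', if i' < j then mv i' else 0) + ↑i -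
                  ((∑ i', mv i') + 1) -
                ∑ i' : Fin k, if i' < b then mv i' else 0 : ℕ) : ℤ))) -
            ((q : ℤ) - ((∑ i', mv i' : ℕ) : ℤ)))
        else 0) = 0 := by
      intro b _ hbj
      rcases hbj.lt_or_gt with hlt | hlt
      · have h3 := trig_T_add_le mv hlt
        exact if_neg (by omega)
      · have h3 := trig_T_add_le mv hlt
        exact if_neg (by omega)
    refine (Finset.sum_eq_single_of_mem j (Finset.mem_univ j) h0).trans ?_
    refine (if_pos (by constructor <;> omega)).trans ?_
    congr 1
    omega

end TrigRows

/-- **Determinant formulas for the solution of Problem `A^t`** (Theorem 3).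
If `m⃗ ≠ (0,…,0)` and `rank H^t_{n,m⃗} = 2m`, then: inserting any row `w` in position
`m+1` gives `det M = ∑_p w_p u_p`; `u` is not identically zero;
`∑_{p=−m}^m c^j_{l−p} u_p = d^j_l` for all `j, l`; `d^j_l = 0` whenever
`n_j < |l| ≤ n + m`; and the tuple `(u, v^1, …, v^k)` with `v^j_l := d^j_l` for
`|l| ≤ n_j` and `v^j_l := 0` otherwise is a solution of Problem `A^t` for `(n, m⃗)`. -/
theorem trig_hermite_pade_det_formulas (k : ℕ) (hk : 1 ≤ k) (c : Fin k → ℤ → ℂ)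
    (hc : ∀ j, ∀ l : ℤ, c j (-l) = starRingEnd ℂ (c j l))
    (n : ℕ) (mv : Fin k → ℕ) (hmv : mv ≠ 0)
    (hrank : (trigHMatrix c n mv).rank = 2 * ∑ i, mv i) :
    (∀ w : Fin (2 * (∑ i, mv i) + 1) → ℂ,
      (trigM c n mv w).det = ∑ q, w q * trigU c n mv q) ∧
    (∃ q, trigU c n mv q ≠ 0) ∧
    (∀ (j : Fin k) (l : ℤ),
      ∑ q : Fin (2 * (∑ i, mv i) + 1),
        c j (l - ((q : ℤ) - ((∑ i, mv i : ℕ) : ℤ))) * trigU c n mv q = trigD c n mv j l) ∧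
    (∀ (j : Fin k) (l : ℤ),
      ((n + (∑ i, mv i) - mv j : ℕ) : ℤ) < |l| → |l| ≤ ((n + ∑ i, mv i : ℕ) : ℤ) →
        trigD c n mv j l = 0) ∧
    IsTrigSolution c n mv
      (fun p => ∑ q : Fin (2 * (∑ i, mv i) + 1),
        if (q : ℤ) - ((∑ i, mv i : ℕ) : ℤ) = p then trigU c n mv q else 0)
      (fun j l => if |l| ≤ ((n + (∑ i, mv i) - mv j : ℕ) : ℤ) then trigD c n mv j l else 0) := by
  classical
  set mtot := ∑ i, mv i with hm
  set mid : Fin (2 * mtot + 1) := ⟨mtot, by omega⟩ with hmiddef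
  -- `trigM` is the middle-row update of a fixed matrix
  have key : ∀ w, trigM c n mv w = (trigM c n mv 0).updateRow mid w := by
    intro w; funext r q
    rcases eq_or_ne r mid with rfl | hr
    · rw [Matrix.updateRow_self]
      show (if (mtot < mtot) then _ else if (mtot = mtot) then w q else _) = w q
      rw [if_neg (lt_irrefl mtot), if_pos rfl]
    · rw [Matrix.updateRow_ne hr]
      have hv : (r : ℕ) ≠ mtot := fun h => hr (Fin.ext h)
      show (if _ then _ else _) = (if _ then _ else _)
      split_ifs <;> first | rfl | (exfalso; omega)
  have hmid : ∀ w, trigM c n mv w mid = w := by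
    intro w; rw [key, Matrix.updateRow_self]
  -- Part 1 : multilinearity
  have part1 : ∀ w : Fin (2 * mtot + 1) → ℂ,
      (trigM c n mv w).det = ∑ q, w q * trigU c n mv q := by
    intro w
    set d : (Fin (2 * mtot + 1) → ℂ) →ₗ[ℂ] ℂ :=
      { toFun := fun x => ((trigM c n mv 0).updateRow mid x).det
        map_add' := fun x y => Matrix.det_updateRow_add _ _ _ _
        map_smul' := fun r x => by
          simp [Matrix.det_updateRow_smul] } with hd
    have hU : ∀ q, trigU c n mv q = d (fun q' => if q' = q then 1 else 0) := by
      intro q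
      show (trigM c n mv _).det = _
      rw [key]; rfl
    have hbasis : w = ∑ q, w q • (fun q' => if q' = q then (1:ℂ) else 0) := by
      funext q'
      simp [Finset.sum_apply, Finset.sum_ite_eq]
    calc (trigM c n mv w).det = d w := by rw [key]; rfl
      _ = ∑ q, w q * trigU c n mv q := by
          conv_lhs => rw [hbasis]
          rw [map_sum]
          refine Finset.sum_congr rfl fun q _ => ?_
          rw [map_smul, smul_eq_mul, hU q]
  -- rows of H are linearly independent
  have hcardD : Fintype.card ((Σ j : Fin k, Fin (mv j)) ⊕ (Σ j : Fin k, Fin (mv j)))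
      = 2 * mtot := by
    simp [Fintype.card_sigma, hm.symm]
    omega
  have hHli : LinearIndependent ℂ (trigHMatrix c n mv) := by
    refine (linearIndependent_iff_card_eq_finrank_span (b := fun r => trigHMatrix c n mv r)).2 ?_
    rw [hcardD]
    show 2 * mtot = Module.finrank ℂ (Submodule.span ℂ (Set.range (trigHMatrix c n mv)))
    exact ((Matrix.rank_eq_finrank_span_row _).symm.trans hrank).symm
  -- Part 2 : u is not identically zero
  have part2 : ∃ q, trigU c n mv q ≠ 0 := by
    by_contra hU0
    push_neg at hU0
    set Brow : {r : Fin (2 * mtot + 1) // r ≠ mid} → (Fin (2 * mtot + 1) → ℂ) :=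
      fun r => trigM c n mv 0 r.1 with hBrowdef
    have hcard' : Fintype.card {r : Fin (2 * mtot + 1) // r ≠ mid} = 2 * mtot := by
      simp [Fintype.card_subtype_compl, Fintype.card_subtype_eq]
    let f' : ((Σ j : Fin k, Fin (mv j)) ⊕ (Σ j : Fin k, Fin (mv j))) →
        {r : Fin (2 * mtot + 1) // r ≠ mid} :=
      fun x => ⟨trigRowIdx mv x, fun h => trigRowIdx_val_ne mv x (congrArg Fin.val h)⟩
    have hf'inj : Function.Injective f' := fun x y h =>
      trigRowIdx_injective mv (Subtype.ext_iff.1 h)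
    have hbij : Function.Bijective f' :=
      (Fintype.bijective_iff_injective_and_card f').2 ⟨hf'inj, by rw [hcardD, hcard']⟩
    set e := Equiv.ofBijective f' hbij with hedef
    have hBrow : Brow = trigHMatrix c n mv ∘ e.symm := by
      funext r
      have h1 : trigRowIdx mv (e.symm r) = r.1 :=
        congrArg Subtype.val (e.apply_symm_apply r)
      show trigM c n mv 0 r.1 = trigHMatrix c n mv (e.symm r)
      rw [← trigM_rowIdx c n mv 0 (e.symm r), h1]
    have hBli : LinearIndependent ℂ Brow := by
      rw [hBrow]
      exact hHli.comp _ e.symm.injective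
    obtain ⟨w, hw⟩ : ∃ w, w ∉ Submodule.span ℂ (Set.range Brow) := by
      by_contra hall
      push_neg at hall
      have htop : Submodule.span ℂ (Set.range Brow) = ⊤ :=
        eq_top_iff.2 fun x _ => hall x
      have h1 : Module.finrank ℂ (Submodule.span ℂ (Set.range Brow)) = 2 * mtot := by
        rw [finrank_span_eq_card hBli, hcard']
      rw [htop, finrank_top, Module.finrank_fintype_fun_eq_card, Fintype.card_fin] at h1
      omega
    have hopt : LinearIndependent ℂ
        (fun o : Option {r : Fin (2 * mtot + 1) // r ≠ mid} => Option.casesOn' o w Brow) :=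
      LinearIndependent.option hBli hw
    have hli : LinearIndependent ℂ (fun r => trigM c n mv w r) := by
      have hcomp : (fun r => trigM c n mv w r)
          = (fun o : Option {r : Fin (2 * mtot + 1) // r ≠ mid} => Option.casesOn' o w Brow)
            ∘ (Equiv.optionSubtypeNe mid).symm := by
        funext r
        rcases eq_or_ne r mid with rfl | hr
        · rw [Function.comp_apply, Equiv.optionSubtypeNe_symm_self]
          exact hmid w
        · rw [Function.comp_apply, Equiv.optionSubtypeNe_symm_of_ne hr]
          show trigM c n mv w r = trigM c n mv 0 r
          rw [key w, key 0, Matrix.updateRow_ne hr, Matrix.updateRow_ne hr]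
      rw [hcomp]
      exact hopt.comp _ (Equiv.injective _)
    have hdet : (trigM c n mv w).det ≠ 0 :=
      IsUnit.ne_zero ((Matrix.isUnit_iff_isUnit_det _).mp
        (Matrix.linearIndependent_rows_iff_isUnit.mp hli))
    apply hdet
    rw [part1 w]
    simp [hU0]
  -- Part 3
  have part3 : ∀ (j : Fin k) (l : ℤ),
      ∑ q : Fin (2 * mtot + 1),
        c j (l - ((q : ℤ) - (mtot : ℤ))) * trigU c n mv q = trigD c n mv j l := by
    intro j l
    exact (part1 _).symm
  -- Part 4
  have part4 : ∀ (j : Fin k) (l : ℤ),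
      ((n + mtot - mv j : ℕ) : ℤ) < |l| → |l| ≤ ((n + mtot : ℕ) : ℤ) →
        trigD c n mv j l = 0 := by
    intro j l h1 h2
    have hmvj : 0 < mv j := by
      have h3 : ((n + mtot - mv j : ℕ) : ℤ) < ((n + mtot : ℕ) : ℤ) := lt_of_lt_of_le h1 h2
      omega
    have hmvle : mv j ≤ mtot := by
      have := trig_S_le mv j
      omega
    rcases le_or_gt 0 l with hl | hl
    · rw [abs_of_nonneg hl] at h1 h2
      have hi0 : (0:ℤ) ≤ l - ((n + mtot - mv j : ℕ) : ℤ) - 1 := by omega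
      set i : ℕ := (l - ((n + mtot - mv j : ℕ) : ℤ) - 1).toNat with hidef
      have hil : (i : ℤ) = l - ((n + mtot - mv j : ℕ) : ℤ) - 1 := Int.toNat_of_nonneg hi0
      have hilt : i < mv j := by omega
      have hne : mid ≠ trigRowIdx mv (Sum.inl ⟨j, ⟨i, hilt⟩⟩) :=
        fun h => trigRowIdx_val_ne mv _ (congrArg Fin.val h).symm
      refine Matrix.det_zero_of_row_eq hne ?_
      rw [hmid, trigM_rowIdx]
      funext q
      show c j (l - ((q : ℤ) - (mtot : ℤ))) = _
      simp only [trigHMatrix]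
      congr 1
      have : ((⟨i, hilt⟩ : Fin (mv j)) : ℤ) = (i : ℤ) := rfl
      rw [this]
      omega
    · rw [abs_of_neg hl] at h1 h2
      have hi0 : (0:ℤ) ≤ -l - ((n + mtot - mv j : ℕ) : ℤ) - 1 := by omega
      set i : ℕ := (-l - ((n + mtot - mv j : ℕ) : ℤ) - 1).toNat with hidef
      have hil : (i : ℤ) = -l - ((n + mtot - mv j : ℕ) : ℤ) - 1 := Int.toNat_of_nonneg hi0
      have hilt : i < mv j := by omega
      have hne : mid ≠ trigRowIdx mv (Sum.inr ⟨j, ⟨i, hilt⟩⟩) :=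
        fun h => trigRowIdx_val_ne mv _ (congrArg Fin.val h).symm
      refine Matrix.det_zero_of_row_eq hne ?_
      rw [hmid, trigM_rowIdx]
      funext q
      show c j (l - ((q : ℤ) - (mtot : ℤ))) = _
      simp only [trigHMatrix]
      congr 1
      have : ((⟨i, hilt⟩ : Fin (mv j)) : ℤ) = (i : ℤ) := rfl
      rw [this]
      omega
  refine ⟨part1, part2, part3, part4, ?_, ?_, ?_, ?_⟩
  · -- u ≠ 0
    obtain ⟨q₀, hq₀⟩ := part2
    intro h0
    apply hq₀
    have hval := congrFun h0 ((q₀ : ℤ) - (mtot : ℤ))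
    rw [show (0 : ℤ → ℂ) ((q₀ : ℤ) - (mtot : ℤ)) = 0 from rfl] at hval
    rw [← hval]
    have hcond : ∀ q : Fin (2 * mtot + 1),
        ((q : ℤ) - (mtot : ℤ) = (q₀ : ℤ) - (mtot : ℤ)) ↔ q = q₀ := by
      intro q
      constructor
      · intro h; exact Fin.ext (by omega)
      · rintro rfl; rfl
    rw [Finset.sum_congr rfl fun q _ => if_congr (hcond q) rfl rfl]
    rw [Finset.sum_ite_eq' Finset.univ q₀]
    simp
  · -- support of u
    intro p hp
    refine Finset.sum_eq_zero fun q _ => if_neg fun h => ?_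
    have hq := q.isLt
    rcases abs_cases p with ⟨h1, h2⟩ | ⟨h1, h2⟩ <;> omega
  · -- support of v
    intro j l hl
    exact if_neg (not_le.mpr hl)
  · -- the convolution identity
    intro j l hl
    calc ∑ p ∈ Finset.Icc (-(mtot : ℤ)) (mtot : ℤ),
          c j (l - p) * (∑ q : Fin (2 * mtot + 1),
            if (q : ℤ) - (mtot : ℤ) = p then trigU c n mv q else 0)
        = ∑ p ∈ Finset.Icc (-(mtot : ℤ)) (mtot : ℤ), ∑ q : Fin (2 * mtot + 1),
            (if (q : ℤ) - (mtot : ℤ) = p then c j (l - p) * trigU c n mv q else 0) := by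
          refine Finset.sum_congr rfl fun p _ => ?_
          rw [Finset.mul_sum]
          exact Finset.sum_congr rfl fun q _ => by rw [mul_ite, mul_zero]
      _ = ∑ q : Fin (2 * mtot + 1), ∑ p ∈ Finset.Icc (-(mtot : ℤ)) (mtot : ℤ),
            (if (q : ℤ) - (mtot : ℤ) = p then c j (l - p) * trigU c n mv q else 0) :=
          Finset.sum_comm
      _ = ∑ q : Fin (2 * mtot + 1), c j (l - ((q : ℤ) - (mtot : ℤ))) * trigU c n mv q := by
          refine Finset.sum_congr rfl fun q _ => ?_
          rw [Finset.sum_ite_eq, if_pos]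
          refine Finset.mem_Icc.2 ⟨?_, ?_⟩ <;> (have := q.isLt; omega)
      _ = trigD c n mv j l := part3 j l
      _ = if |l| ≤ ((n + mtot - mv j : ℕ) : ℤ) then trigD c n mv j l else 0 := by
          by_cases h : |l| ≤ ((n + mtot - mv j : ℕ) : ℤ)
          · rw [if_pos h]
          · rw [if_neg h, part4 j l (not_le.mp h) hl]
end

section
/- (Reality of the solution.) Let m⃗ ≠ (0,…,0), suppose c^j_{−l} = conj(c^j_l) for all j and l, and suppose rank H^t_{n,m⃗} = 2m. Then the determinant solution satisfies u_{−p} = conj(u_p) for all p and d^j_{−l} = conj(d^j_l) for all j, l; consequently the trigonometric polynomials Q(x) = ∑_{p=−m}^m u_p e^{ipx} and P_j(x) = ∑_{|l|≤n_j} d^j_l e^{ilx} take real values for every real x. -/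
open Finset

lemma mv_split {k : ℕ} (mv : Fin k → ℕ) (j : Fin k) :
    (∑ i : Fin k, if j < i then mv i else 0) + (∑ i : Fin k, if i < j then mv i else 0) + mv j
      = ∑ i, mv i := by
  have h1 : mv j = ∑ i : Fin k, if i = j then mv i else 0 := by
    rw [Finset.sum_ite_eq' Finset.univ j mv]; simp
  rw [h1, ← Finset.sum_add_distrib, ← Finset.sum_add_distrib]
  refine Finset.sum_congr rfl fun i _ => ?_
  simp only [Fin.lt_def, Fin.ext_iff]
  split_ifs <;> omega

lemma trigM_entry_conj {k : ℕ} (c : Fin k → ℤ → ℂ)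
    (hc : ∀ j, ∀ l : ℤ, c j (-l) = starRingEnd ℂ (c j l))
    (n : ℕ) (mv : Fin k → ℕ) (w : Fin (2 * (∑ i, mv i) + 1) → ℂ)
    (r q : Fin (2 * (∑ i, mv i) + 1)) :
    trigM c n mv (fun q' => starRingEnd ℂ (w q'.rev)) r q
      = starRingEnd ℂ (trigM c n mv w r.rev q.rev) := by
  have hrlt := r.isLt
  have hqlt := q.isLt
  have hr : (r.rev : ℕ) = 2 * (∑ i, mv i) - r.val := by rw [Fin.val_rev]; omega
  have hq : (q.rev : ℕ) = 2 * (∑ i, mv i) - q.val := by rw [Fin.val_rev]; omega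
  unfold trigM
  rcases lt_trichotomy (r.val) (∑ i, mv i) with h | h | h
  · rw [if_pos h, if_neg (by omega : ¬ ((r.rev : ℕ) < ∑ i, mv i)),
      if_neg (by omega : ¬ ((r.rev : ℕ) = ∑ i, mv i)), map_sum]
    refine Finset.sum_congr rfl fun j _ => ?_
    have hSj := mv_split mv j
    rw [apply_ite (starRingEnd ℂ), map_zero]
    by_cases hP : (∑ i : Fin k, if j < i then mv i else 0) ≤ r.val ∧
        r.val < (∑ i : Fin k, if j < i then mv i else 0) + mv j
    · rw [if_pos hP, if_pos (by omega)]
      rw [← hc]; congr 1; omega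
    · rw [if_neg hP, if_neg (by omega)]
  · rw [if_neg (by omega), if_pos h, if_neg (by omega : ¬ ((r.rev : ℕ) < ∑ i, mv i)),
      if_pos (by omega : (r.rev : ℕ) = ∑ i, mv i)]
  · rw [if_neg (by omega), if_neg (by omega),
      if_pos (by omega : (r.rev : ℕ) < ∑ i, mv i), map_sum]
    refine Finset.sum_congr rfl fun j _ => ?_
    have hSj := mv_split mv j
    rw [apply_ite (starRingEnd ℂ), map_zero]
    by_cases hP : (∑ i : Fin k, if i < j then mv i else 0) ≤ r.val - ((∑ i, mv i) + 1) ∧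
        r.val - ((∑ i, mv i) + 1) < (∑ i : Fin k, if i < j then mv i else 0) + mv j
    · rw [if_pos hP, if_pos (by omega)]
      rw [← hc]; congr 1; omega
    · rw [if_neg hP, if_neg (by omega)]

lemma trigM_det_conj {k : ℕ} (c : Fin k → ℤ → ℂ)
    (hc : ∀ j, ∀ l : ℤ, c j (-l) = starRingEnd ℂ (c j l))
    (n : ℕ) (mv : Fin k → ℕ) (w : Fin (2 * (∑ i, mv i) + 1) → ℂ) :
    (trigM c n mv (fun q' => starRingEnd ℂ (w q'.rev))).det
      = starRingEnd ℂ ((trigM c n mv w).det) := by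
  have heq : trigM c n mv (fun q' => starRingEnd ℂ (w q'.rev))
      = (((starRingEnd ℂ).mapMatrix (trigM c n mv w)).submatrix
          (⇑(Fin.revPerm)) (⇑(Fin.revPerm))) := by
    ext r q
    exact trigM_entry_conj c hc n mv w r q
  rw [heq, Matrix.det_submatrix_equiv_self, ← RingHom.map_det]

lemma trigU_conj {k : ℕ} (c : Fin k → ℤ → ℂ)
    (hc : ∀ j, ∀ l : ℤ, c j (-l) = starRingEnd ℂ (c j l))
    (n : ℕ) (mv : Fin k → ℕ) (q : Fin (2 * (∑ i, mv i) + 1)) :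
    trigU c n mv q.rev = starRingEnd ℂ (trigU c n mv q) := by
  unfold trigU
  have hw : (fun q' : Fin (2 * (∑ i, mv i) + 1) => if q' = q.rev then (1 : ℂ) else 0)
      = fun q' => starRingEnd ℂ (if q'.rev = q then (1 : ℂ) else 0) := by
    funext q'
    rw [apply_ite (starRingEnd ℂ), map_one, map_zero]
    congr 1
    simp only [eq_iff_iff]
    constructor
    · rintro rfl; simp
    · intro h; rw [← h, Fin.rev_rev]
  rw [hw]
  exact trigM_det_conj c hc n mv (fun q' => if q' = q then (1:ℂ) else 0)

lemma trigD_conj {k : ℕ} (c : Fin k → ℤ → ℂ)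
    (hc : ∀ j, ∀ l : ℤ, c j (-l) = starRingEnd ℂ (c j l))
    (n : ℕ) (mv : Fin k → ℕ) (j : Fin k) (l : ℤ) :
    trigD c n mv j (-l) = starRingEnd ℂ (trigD c n mv j l) := by
  unfold trigD
  have hw : (fun q : Fin (2 * (∑ i, mv i) + 1) =>
        c j (-l - ((q : ℤ) - ((∑ i, mv i : ℕ) : ℤ))))
      = fun q => starRingEnd ℂ (c j (l - ((q.rev : ℤ) - ((∑ i, mv i : ℕ) : ℤ)))) := by
    funext q
    rw [← hc]
    congr 1
    have hq : (q.rev : ℕ) = 2 * (∑ i, mv i) - q.val := by rw [Fin.val_rev]; omega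
    have := q.isLt
    omega
  rw [hw]
  exact trigM_det_conj c hc n mv (fun q => c j (l - ((q : ℤ) - ((∑ i, mv i : ℕ) : ℤ))))
/-- **Reality of the determinant solution** (Corollary 2).  If `m⃗ ≠ (0,…,0)`,
`c^j_{−l} = conj (c^j_l)` for all `j, l`, and `rank H^t_{n,m⃗} = 2m`, then the
determinant solution satisfies `u_{−p} = conj (u_p)` for all `p` and
`d^j_{−l} = conj (d^j_l)` for all `j, l`; consequently the trigonometric polynomials
`Q(x) = ∑_{p=−m}^m u_p e^{ipx}` and `P_j(x) = ∑_{|l|≤n_j} d^j_l e^{ilx}` take real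
values for every real `x`. -/
theorem trig_hermite_pade_real (k : ℕ) (hk : 1 ≤ k) (c : Fin k → ℤ → ℂ)
    (hc : ∀ j, ∀ l : ℤ, c j (-l) = starRingEnd ℂ (c j l))
    (n : ℕ) (mv : Fin k → ℕ) (hmv : mv ≠ 0)
    (hrank : (trigHMatrix c n mv).rank = 2 * ∑ i, mv i) :
    (∀ q : Fin (2 * (∑ i, mv i) + 1),
      trigU c n mv q.rev = starRingEnd ℂ (trigU c n mv q)) ∧
    (∀ (j : Fin k) (l : ℤ), trigD c n mv j (-l) = starRingEnd ℂ (trigD c n mv j l)) ∧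
    (∀ x : ℝ,
      (∑ q : Fin (2 * (∑ i, mv i) + 1),
        trigU c n mv q *
          Complex.exp (Complex.I * (((q : ℤ) - ((∑ i, mv i : ℕ) : ℤ) : ℤ) : ℂ) * (x : ℂ))).im
        = 0) ∧
    (∀ (j : Fin k) (x : ℝ),
      (∑ l ∈ Finset.Icc (-((n + (∑ i, mv i) - mv j : ℕ) : ℤ))
          ((n + (∑ i, mv i) - mv j : ℕ) : ℤ),
        trigD c n mv j l * Complex.exp (Complex.I * (l : ℂ) * (x : ℂ))).im = 0) := by
  refine ⟨fun q => trigU_conj c hc n mv q, fun j l => trigD_conj c hc n mv j l, ?_, ?_⟩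
  · intro x
    rw [← Complex.conj_eq_iff_im, map_sum]
    refine Fintype.sum_equiv Fin.revPerm _ _ fun q => ?_
    simp only [Fin.revPerm_apply]
    rw [map_mul, ← trigU_conj c hc n mv q, ← Complex.exp_conj]
    congr 1
    have hq : (q.rev : ℕ) = 2 * (∑ i, mv i) - q.val := by rw [Fin.val_rev]; omega
    have hql := q.isLt
    have hz : ((q.rev : ℤ) - ((∑ i, mv i : ℕ) : ℤ)) = -((q : ℤ) - ((∑ i, mv i : ℕ) : ℤ)) := by
      omega
    rw [hz]
    push_cast
    simp only [map_mul, Complex.conj_I, Complex.conj_ofReal, map_intCast, map_sub, map_natCast, map_sum]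
    ring
  · intro j x
    rw [← Complex.conj_eq_iff_im, map_sum]
    refine Finset.sum_equiv (Equiv.neg ℤ) (fun l => ?_) (fun l _ => ?_)
    · simp only [Equiv.neg_apply, Finset.mem_Icc]
      omega
    · simp only [Equiv.neg_apply]
      rw [map_mul, ← trigD_conj c hc n mv j l, ← Complex.exp_conj]
      congr 1
      push_cast
      simp only [map_mul, Complex.conj_I, Complex.conj_ofReal, map_intCast]
      ring
end

section
/- (Non-uniqueness example.) Let k = 1 and let c : ℤ → ℂ be given by c_0 = 0 and c_l = c_{−l} = a_l/2 for l ≥ 1, where a_1 = a_2 = a_4 = 2, a_3 = 4, and a_l = 1/l! for l ≥ 5. Take n = 2, m⃗ = (1) (so m = 1, n_1 = 2). For a, b ∈ ℂ define u^{a,b} supported in {−1,0,1} by u^{a,b}_{−1} = a, u^{a,b}_0 = −(a+b)/2, u^{a,b}_1 = b, and v^{a,b} supported in {−2,…,2} by v^{a,b}_{−2} = (a+3b)/2, v^{a,b}_{−1} = (b−a)/2, v^{a,b}_0 = a+b, v^{a,b}_1 = (a−b)/2, v^{a,b}_2 = (3a+b)/2. Then (u, v) is a solution of Problem A^t for these data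 if and only if (u, v) = (u^{a,b}, v^{a,b}) for some (a,b) ∈ ℂ² ∖ {(0,0)}. In particular, Problem A^t for these data has two solutions that are not proportional, so its solution is not unique up to a scalar. -/
open Finset

/-- The coefficients `a_l` of Example 2: `a₁ = a₂ = a₄ = 2`, `a₃ = 4`, `a_l = 1/l!` for
`l ≥ 5` (and `a₀ = 0`, since `f` has no constant term). -/
noncomputable def exA : ℕ → ℂ := fun l =>
  if l = 1 ∨ l = 2 ∨ l = 4 then 2
  else if l = 3 then 4
  else if 5 ≤ l then 1 / (Nat.factorial l : ℂ)
  else 0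

/-- The complex-form coefficient sequence: `c₀ = 0`, `c_l = c_{−l} = a_{|l|}/2`. -/
noncomputable def exC : ℤ → ℂ := fun l => exA l.natAbs / 2

/-- A solution of Problem `A^t` for `k = 1`, `n = 2`, `m = 1` (so `n₁ = 2`, `n + m = 3`)
and the sequence `exC`: `u` supported in `{−1,0,1}` and not identically zero,
`v` supported in `{−2,…,2}`, and `∑_{p=−1}^1 c_{l−p} u_p = v_l` for `|l| ≤ 3`. -/
noncomputable def IsExTrigSolution (u v : ℤ → ℂ) : Prop :=
  u ≠ 0 ∧ (∀ p : ℤ, 1 < |p| → u p = 0) ∧ (∀ l : ℤ, 2 < |l| → v l = 0) ∧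
    ∀ l : ℤ, |l| ≤ 3 → ∑ p ∈ Finset.Icc (-1 : ℤ) 1, exC (l - p) * u p = v l

/-- The family of numerators/denominators of Example 2:
`u^{a,b}_{−1} = a`, `u^{a,b}_0 = −(a+b)/2`, `u^{a,b}_1 = b`. -/
noncomputable def exU (a b : ℂ) : ℤ → ℂ := fun p =>
  if p = -1 then a else if p = 0 then -(a + b) / 2 else if p = 1 then b else 0

/-- `v^{a,b}_{−2} = (a+3b)/2`, `v^{a,b}_{−1} = (b−a)/2`, `v^{a,b}_0 = a+b`,
`v^{a,b}_1 = (a−b)/2`, `v^{a,b}_2 = (3a+b)/2`. -/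
noncomputable def exV (a b : ℂ) : ℤ → ℂ := fun l =>
  if l = -2 then (a + 3 * b) / 2
  else if l = -1 then (b - a) / 2
  else if l = 0 then a + b
  else if l = 1 then (a - b) / 2
  else if l = 2 then (3 * a + b) / 2
  else 0

lemma exC0 : exC 0 = 0 := by norm_num [exC, exA]
lemma exC1 : exC 1 = 1 := by norm_num [exC, exA]
lemma exC2 : exC 2 = 1 := by norm_num [exC, exA]
lemma exC3 : exC 3 = 2 := by norm_num [exC, exA]
lemma exC4 : exC 4 = 1 := by norm_num [exC, exA]
lemma exCn1 : exC (-1) = 1 := by norm_num [exC, exA]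
lemma exCn2 : exC (-2) = 1 := by norm_num [exC, exA]
lemma exCn3 : exC (-3) = 2 := by norm_num [exC, exA]
lemma exCn4 : exC (-4) = 1 := by norm_num [exC, exA]

lemma sum_eq (u : ℤ → ℂ) (l : ℤ) :
    ∑ p ∈ Finset.Icc (-1:ℤ) 1, exC (l - p) * u p
      = exC (l+1) * u (-1) + exC l * u 0 + exC (l-1) * u 1 := by
  rw [show Finset.Icc (-1:ℤ) 1 = {-1,0,1} from by ext x; simp; omega]
  simp [Finset.sum_insert, sub_neg_eq_add]
  ring

lemma exSol (a b : ℂ) (hab : ¬(a = 0 ∧ b = 0)) : IsExTrigSolution (exU a b) (exV a b) := by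
  refine ⟨?_, ?_, ?_, ?_⟩
  · intro h
    have h1 := congrFun h (-1)
    have h2 := congrFun h 1
    simp [exU] at h1 h2
    exact hab ⟨h1, h2⟩
  · intro p hp
    have h1 : p ≠ -1 ∧ p ≠ 0 ∧ p ≠ 1 := by
      rw [lt_abs] at hp; omega
    simp [exU, h1.1, h1.2.1, h1.2.2]
  · intro l hl
    have h1 : l ≠ -2 ∧ l ≠ -1 ∧ l ≠ 0 ∧ l ≠ 1 ∧ l ≠ 2 := by
      rw [lt_abs] at hl; omega
    simp [exV, h1.1, h1.2.1, h1.2.2.1, h1.2.2.2.1, h1.2.2.2.2]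
  · intro l hl
    rw [sum_eq]
    rw [abs_le] at hl
    obtain ⟨hl1, hl2⟩ := hl
    interval_cases l <;>
      · simp [exU, exV, exC0, exC1, exC2, exC3, exC4, exCn1, exCn2, exCn3, exCn4]
        try ring

/-- **Non-uniqueness example (Example 2).**  `(u, v)` is a solution of Problem `A^t` for
these data iff `(u, v) = (u^{a,b}, v^{a,b})` for some `(a, b) ≠ (0, 0)`.  In particular
Problem `A^t` has two solutions that are not proportional, so its solution is not unique
up to a scalar. -/
theorem trig_nonuniqueness_example :
    (∀ u v : ℤ → ℂ,
      IsExTrigSolution u v ↔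
        ∃ a b : ℂ, ¬(a = 0 ∧ b = 0) ∧ u = exU a b ∧ v = exV a b) ∧
    (∃ u v u' v' : ℤ → ℂ,
      IsExTrigSolution u v ∧ IsExTrigSolution u' v' ∧
        ∀ lam : ℂ, ¬(u' = lam • u ∧ v' = lam • v)) := by
  have main : ∀ u v : ℤ → ℂ,
      IsExTrigSolution u v ↔
        ∃ a b : ℂ, ¬(a = 0 ∧ b = 0) ∧ u = exU a b ∧ v = exV a b := by
    intro u v
    constructor
    · rintro ⟨hne, hus, hvs, heq⟩
      have hu0 : u 0 = -(u (-1) + u 1) / 2 := by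
        have h3 := heq 3 (by norm_num)
        rw [sum_eq, hvs 3 (by norm_num), show (3:ℤ)+1 = 4 by norm_num,
          show (3:ℤ)-1 = 2 by norm_num, exC4, exC3, exC2] at h3
        linear_combination h3 / 2
      refine ⟨u (-1), u 1, ?_, ?_, ?_⟩
      · intro ⟨ha, hb⟩
        apply hne
        funext p
        by_cases h1 : p = -1
        · simpa [h1] using ha
        by_cases h2 : p = 0
        · rw [h2, hu0, ha, hb]; simp
        by_cases h3' : p = 1
        · simpa [h3'] using hb
        · simpa using hus p (by rw [lt_abs]; omega)
      · funext p
        by_cases h1 : p = -1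
        · simp [exU, h1]
        by_cases h2 : p = 0
        · simp [exU, h2, h1, hu0]
        by_cases h3' : p = 1
        · simp [exU, h3', h1, h2]
        · rw [hus p (by rw [lt_abs]; omega)]
          simp [exU, h1, h2, h3']
      · funext l
        by_cases hl : |l| ≤ 2
        · have := heq l (by omega)
          rw [sum_eq] at this
          rw [abs_le] at hl
          obtain ⟨hl1, hl2⟩ := hl
          interval_cases l <;>
            · rw [← this, hu0]
              simp [exV, exC0, exC1, exC2, exC3, exCn1, exCn2, exCn3]
              try ring
        · rw [hvs l (by omega)]
          push_neg at hl
          have : l ≠ -2 ∧ l ≠ -1 ∧ l ≠ 0 ∧ l ≠ 1 ∧ l ≠ 2 := by rw [lt_abs] at hl; omega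
          simp [exV, this.1, this.2.1, this.2.2.1, this.2.2.2.1, this.2.2.2.2]
    · rintro ⟨a, b, hab, hu, hv⟩
      rw [hu, hv]
      exact exSol a b hab
  refine ⟨main, exU 1 0, exV 1 0, exU 0 1, exV 0 1,
    exSol 1 0 (by norm_num), exSol 0 1 (by norm_num), ?_⟩
  rintro lam ⟨hu, -⟩
  have h1 := congrFun hu (-1)
  have h2 := congrFun hu 1
  simp [exU] at h1 h2
end
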